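/- arXiv:1108.2967 — 6 statements merged into one kernel-verified Lean document; each statement's English description precedes it below -/
import Mathlib

section
/- Let n ≥ 2, a ∈ Bⁿ with 0 < |a| < 1, and x ∈ Bⁿ. Then (1+|x|)/(1+|T_a(x)|) ≤ 1+|a|. -/
/-!
Since `p_a` is an isometry, `|T_a x| = |σ_a x|`, and expanding the inversion gives
`|T_a x| · [a, x] = |x - a|`, where `[a, x] = |a| |x - a*|` satisfies
`[a, x]² = 1 - 2⟨x, a⟩ + |x|²|a|² ≤ (1 + |x||a|)²` by Cauchy–Schwarz.
Hence `|x| - |a| ≤ |x - a| ≤ (1 + |a|) |T_a x|` for `|x| < 1`, which rearranges to the claim.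
-/

open Metric Set Real Filter

/-- `x* = x / |x|²`, the inversion in the unit sphere (with junk value `0* = 0`). -/
noncomputable def invPt {E : Type*} [NormedAddCommGroup E] [InnerProductSpace ℝ E] (x : E) : E :=
  (‖x‖ ^ 2)⁻¹ • x

/-- Inversion `σ_a(x) = a* + r² (x - a*)*` in the sphere `S^{n-1}(a*, r)`, `r² = |a|⁻² - 1`. -/
noncomputable def sigmaMap {E : Type*} [NormedAddCommGroup E] [InnerProductSpace ℝ E]
    (a x : E) : E :=
  invPt a + ((‖a‖ ^ 2)⁻¹ - 1) • invPt (x - invPt a)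

/-- Reflection `p_a` in the hyperplane through the origin orthogonal to `a`. -/
noncomputable def reflMap {E : Type*} [NormedAddCommGroup E] [InnerProductSpace ℝ E]
    (a x : E) : E :=
  x - ((2 * (inner ℝ x a : ℝ) / ‖a‖ ^ 2) : ℝ) • a

open Classical in
/-- The Möbius transformation `T_a = p_a ∘ σ_a` of the unit ball onto itself with `T_a a = 0`,
with `T_0 = id`. -/
noncomputable def TMap {E : Type*} [NormedAddCommGroup E] [InnerProductSpace ℝ E]
    (a : E) (x : E) : E :=
  if a = 0 then x else reflMap a (sigmaMap a x)

open scoped RealInnerProductSpace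

section Moebius

variable {E : Type*} [NormedAddCommGroup E] [InnerProductSpace ℝ E]

lemma norm_reflMap (a y : E) : ‖reflMap a y‖ = ‖y‖ := by
  rcases eq_or_ne a 0 with rfl | ha
  · simp [reflMap]
  rw [← sq_eq_sq₀ (norm_nonneg _) (norm_nonneg _), reflMap, norm_sub_sq_real,
    real_inner_smul_right, norm_smul, mul_pow, Real.norm_eq_abs, sq_abs]
  field_simp
  ring

lemma norm_invPt (x : E) : ‖invPt x‖ = ‖x‖⁻¹ := by
  rcases eq_or_ne x 0 with rfl | hx
  · simp [invPt]
  have : ‖x‖ ≠ 0 := norm_ne_zero_iff.mpr hx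
  rw [invPt, norm_smul, norm_inv, norm_pow, norm_norm]
  field_simp

lemma inner_invPt_right (x a : E) : ⟪x, invPt a⟫ = (‖a‖ ^ 2)⁻¹ * ⟪x, a⟫ :=
  real_inner_smul_right _ _ _

lemma sq_norm_mul_norm_sub_invPt {a : E} (ha : a ≠ 0) (x : E) :
    (‖a‖ * ‖x - invPt a‖) ^ 2 = 1 - 2 * ⟪x, a⟫ + ‖x‖ ^ 2 * ‖a‖ ^ 2 := by
  rw [mul_pow, norm_sub_sq_real, inner_invPt_right, norm_invPt, inv_pow]
  field_simp
  ring

lemma norm_sigmaMap_sq_mul {a x : E} (ha : a ≠ 0) (hx : x ≠ invPt a) :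
    ‖sigmaMap a x‖ ^ 2 * (1 - 2 * ⟪x, a⟫ + ‖x‖ ^ 2 * ‖a‖ ^ 2) = ‖x - a‖ ^ 2 := by
  set u := x - invPt a with hu
  have hu0 : ‖u‖ ≠ 0 := norm_ne_zero_iff.mpr (sub_ne_zero.mpr hx)
  have hbracket : (‖a‖ * ‖u‖) ^ 2 = 1 - 2 * ⟪x, a⟫ + ‖x‖ ^ 2 * ‖a‖ ^ 2 :=
    sq_norm_mul_norm_sub_invPt ha x
  have hinvu : invPt u = (‖u‖ ^ 2)⁻¹ • u := rfl
  have hinner : ⟪invPt a, u⟫ = (‖a‖ ^ 2)⁻¹ * ⟪x, a⟫ - (‖a‖ ^ 2)⁻¹ := by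
    rw [hu, inner_sub_right, real_inner_self_eq_norm_sq, norm_invPt, real_inner_comm,
      inner_invPt_right, inv_pow]
  have hsigma : ‖sigmaMap a x‖ ^ 2 = (‖a‖ ^ 2)⁻¹
      + 2 * ((‖a‖ ^ 2)⁻¹ - 1) * (‖u‖ ^ 2)⁻¹ * ⟪invPt a, u⟫
      + ((‖a‖ ^ 2)⁻¹ - 1) ^ 2 * (‖u‖ ^ 2)⁻¹ := by
    rw [sigmaMap, ← hu, hinvu, smul_smul, norm_add_sq_real, norm_invPt, real_inner_smul_right,
      norm_smul, mul_pow, Real.norm_eq_abs, sq_abs]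
    field_simp
  have hx_sq : ‖x‖ ^ 2 = ‖u‖ ^ 2 + 2 * ((‖a‖ ^ 2)⁻¹ * ⟪x, a⟫) - (‖a‖ ^ 2)⁻¹ := by
    rw [hu, norm_sub_sq_real, inner_invPt_right, norm_invPt, inv_pow]
    ring
  rw [← hbracket, hsigma, hinner, norm_sub_sq_real x a, hx_sq]
  field_simp
  ring

lemma norm_sub_le_mul_norm_TMap {a x : E} (ha : a ≠ 0) (hx : x ≠ invPt a) :
    ‖x - a‖ ≤ (1 + ‖x‖ * ‖a‖) * ‖TMap a x‖ := by
  have hT : ‖TMap a x‖ = ‖sigmaMap a x‖ := by rw [TMap, if_neg ha, norm_reflMap]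
  have hbracket : 1 - 2 * ⟪x, a⟫ + ‖x‖ ^ 2 * ‖a‖ ^ 2 ≤ (1 + ‖x‖ * ‖a‖) ^ 2 := by
    nlinarith [neg_le_of_abs_le (abs_real_inner_le_norm x a)]
  rw [← pow_le_pow_iff_left₀ (norm_nonneg _) (by positivity) two_ne_zero,
    ← norm_sigmaMap_sq_mul ha hx, hT, mul_pow, mul_comm]
  gcongr

end Moebius

theorem one_add_norm_div_TMap_le_general {n : ℕ}
    (a : EuclideanSpace ℝ (Fin n)) (ha0 : 0 < ‖a‖) (ha1 : ‖a‖ < 1)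
    (x : EuclideanSpace ℝ (Fin n)) (hx : x ∈ ball (0 : EuclideanSpace ℝ (Fin n)) 1) :
    (1 + ‖x‖) / (1 + ‖TMap a x‖) ≤ 1 + ‖a‖ := by
  have ha : a ≠ 0 := norm_pos_iff.mp ha0
  have hx1 : ‖x‖ < 1 := mem_ball_zero_iff.mp hx
  have hx_ne : x ≠ invPt a := by
    rintro rfl
    rw [norm_invPt] at hx1
    exact (one_lt_inv₀ ha0).mpr ha1 |>.not_gt hx1
  have hxa : ‖x‖ * ‖a‖ ≤ ‖a‖ := mul_le_of_le_one_left ha0.le hx1.le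
  have hlower : ‖x‖ - ‖a‖ ≤ (1 + ‖a‖) * ‖TMap a x‖ :=
    calc ‖x‖ - ‖a‖ ≤ ‖x - a‖ := norm_sub_norm_le x a
      _ ≤ (1 + ‖x‖ * ‖a‖) * ‖TMap a x‖ := norm_sub_le_mul_norm_TMap ha hx_ne
      _ ≤ (1 + ‖a‖) * ‖TMap a x‖ := by gcongr
  rw [div_le_iff₀ (by positivity)]
  linarith

/-- `(1 + |x|) / (1 + |T_a(x)|) ≤ 1 + |a|`. -/
theorem one_add_norm_div_TMap_le {n : ℕ} (hn : 2 ≤ n)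
    (a : EuclideanSpace ℝ (Fin n)) (ha0 : 0 < ‖a‖) (ha1 : ‖a‖ < 1)
    (x : EuclideanSpace ℝ (Fin n)) (hx : x ∈ ball (0 : EuclideanSpace ℝ (Fin n)) 1) :
    (1 + ‖x‖) / (1 + ‖TMap a x‖) ≤ 1 + ‖a‖ :=
  one_add_norm_div_TMap_le_general a ha0 ha1 x hx
end

section
/- Let n ≥ 2 and a ∈ Bⁿ with 0 < |a| < 1. For t > 0 small enough that (1+t)a ∈ Bⁿ and t|a| < 1−|a|, one has k_{Bⁿ}(a,(1+t)a) = log(1 + t|a|/(1−|a|−t|a|)) and k_{Bⁿ}(T_a(a), T_a((1+t)a)) = log(1 + t|a|/(1−t|a|−(1+t)|a|²)), and consequently lim_{t→0+} k_{Bⁿ}(T_a(a),T_a((1+t)a))/k_{Bⁿ}(a,(1+t)a) = 1/(1+|a|). -/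
open Metric Set Real Filter

/-- Conformal-type distance: infimum of weighted lengths of C¹ curves in `D` joining `x` to `y`. -/
noncomputable def confDist {E : Type*} [NormedAddCommGroup E] [NormedSpace ℝ E]
    (ρ : E → ℝ) (D : Set E) (x y : E) : ℝ :=
  sInf { L : ℝ | ∃ γ : ℝ → E, ContDiffOn ℝ 1 γ (Icc 0 1) ∧ γ 0 = x ∧ γ 1 = y ∧
    (∀ t ∈ Icc (0:ℝ) 1, γ t ∈ D) ∧
    L = ∫ t in (0:ℝ)..1, ρ (γ t) * ‖derivWithin γ (Icc 0 1) t‖ }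

/-- Quasihyperbolic distance in `D`, with density `1 / d(z, ∂D)`. -/
noncomputable def qhDist {E : Type*} [NormedAddCommGroup E] [NormedSpace ℝ E]
    (D : Set E) (x y : E) : ℝ :=
  confDist (fun z => (infDist z (frontier D))⁻¹) D x y

/-! Along a curve `γ` in the unit ball and for a unit vector `u`, the derivative of
`-log (1 - ⟪γ, u⟫)` is `⟪γ', u⟫ / (1 - ⟪γ, u⟫) ≤ ‖γ'‖ / (1 - ‖γ‖)`, the quasihyperbolic
integrand, with equality on the radius through `u`. Hence the radial segment is a geodesic and
`k(r u, s u) = log ((1 - r) / (1 - s))`. The Möbius map `T_a` keeps the line through `a`, sending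
`s a` to `((s - 1) / (1 - s |a|²)) a`, so both distances are explicit; they vanish at `t = 0`
and the ratio tends to the ratio of their derivatives there,
`(|a| / (1 - |a|²)) / (|a| / (1 - |a|)) = 1 / (1 + |a|)`. -/

open scoped RealInnerProductSpace Topology

section ConfDist

variable {E : Type*} [NormedAddCommGroup E] [NormedSpace ℝ E]

noncomputable def weightedLength (ρ : E → ℝ) (γ : ℝ → E) : ℝ :=
  ∫ t in (0:ℝ)..1, ρ (γ t) * ‖derivWithin γ (Icc 0 1) t‖

theorem weightedLength_congr {ρ ρ' : E → ℝ} {D : Set E} (h : EqOn ρ ρ' D) {γ : ℝ → E}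
    (hγD : ∀ t ∈ Icc (0:ℝ) 1, γ t ∈ D) : weightedLength ρ γ = weightedLength ρ' γ :=
  intervalIntegral.integral_congr fun t ht => by
    rw [uIcc_of_le zero_le_one] at ht
    simp only [h (hγD t ht)]

theorem confDist_congr {ρ ρ' : E → ℝ} {D : Set E} (h : EqOn ρ ρ' D) (x y : E) :
    confDist ρ D x y = confDist ρ' D x y := by
  unfold confDist
  congr 1
  ext L
  constructor <;> rintro ⟨γ, hγ, hγ0, hγ1, hγD, rfl⟩
  · exact ⟨γ, hγ, hγ0, hγ1, hγD, weightedLength_congr h hγD⟩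
  · exact ⟨γ, hγ, hγ0, hγ1, hγD, weightedLength_congr h.symm hγD⟩

theorem confDist_eq_of_forall_le {ρ : E → ℝ} {D : Set E} {x y : E} {L : ℝ} {γ₀ : ℝ → E}
    (hγ₀ : ContDiffOn ℝ 1 γ₀ (Icc 0 1)) (hγ₀0 : γ₀ 0 = x) (hγ₀1 : γ₀ 1 = y)
    (hγ₀D : ∀ t ∈ Icc (0:ℝ) 1, γ₀ t ∈ D) (hγ₀L : weightedLength ρ γ₀ = L)
    (hle : ∀ γ : ℝ → E, ContDiffOn ℝ 1 γ (Icc 0 1) → γ 0 = x → γ 1 = y →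
      (∀ t ∈ Icc (0:ℝ) 1, γ t ∈ D) → L ≤ weightedLength ρ γ) :
    confDist ρ D x y = L :=
  IsLeast.csInf_eq ⟨⟨γ₀, hγ₀, hγ₀0, hγ₀1, hγ₀D, hγ₀L.symm⟩,
    by rintro _ ⟨γ, hγ, hγ0, hγ1, hγD, rfl⟩; exact hle γ hγ hγ0 hγ1 hγD⟩

theorem infDist_sphere_zero_of_norm_le [Nontrivial E] {R : ℝ} {z : E} (hz : ‖z‖ ≤ R) :
    infDist z (sphere (0:E) R) = R - ‖z‖ := by
  obtain ⟨w, hw, hzw⟩ : ∃ w : E, ‖w‖ = 1 ∧ ‖z‖ • w = z := by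
    rcases eq_or_ne z 0 with rfl | hz0
    · obtain ⟨w, hw⟩ := exists_norm_eq E zero_le_one
      exact ⟨w, hw, by simp⟩
    · exact ⟨‖z‖⁻¹ • z, by simp [norm_smul, hz0], by simp [smul_smul, hz0]⟩
  have hRw : R • w ∈ sphere (0:E) R := by
    simp [norm_smul, hw, abs_of_nonneg ((norm_nonneg z).trans hz)]
  refine le_antisymm ((infDist_le_dist_of_mem hRw).trans_eq ?_) ?_
  · rw [dist_eq_norm, ← hzw, ← sub_smul, norm_smul, hw, mul_one, norm_smul, hw, mul_one,
      norm_norm, Real.norm_of_nonpos (by linarith), neg_sub]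
  · refine (le_infDist ⟨_, hRw⟩).2 fun y hy => ?_
    rw [dist_comm, dist_eq_norm, ← mem_sphere_zero_iff_norm.1 hy]
    exact norm_sub_norm_le y z

end ConfDist

section UnitBall

variable {E : Type*} [NormedAddCommGroup E] [InnerProductSpace ℝ E]

theorem qhDist_unitBall [Nontrivial E] (x y : E) :
    qhDist (ball (0:E) 1) x y = confDist (fun z => (1 - ‖z‖)⁻¹) (ball (0:E) 1) x y :=
  confDist_congr (fun z hz => by
    rw [frontier_ball 0 one_ne_zero,
      infDist_sphere_zero_of_norm_le (mem_ball_zero_iff.1 hz).le]) x y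

theorem integral_inner_deriv_div_one_sub_inner {γ : ℝ → E} (hγ : ContDiffOn ℝ 1 γ (Icc 0 1))
    (u : E) (hlt : ∀ t ∈ Icc (0:ℝ) 1, ⟪γ t, u⟫ < 1) :
    ∫ t in (0:ℝ)..1, ⟪derivWithin γ (Icc 0 1) t, u⟫ / (1 - ⟪γ t, u⟫) =
      log ((1 - ⟪γ 0, u⟫) / (1 - ⟪γ 1, u⟫)) := by
  have hpos : ∀ t ∈ Icc (0:ℝ) 1, 0 < 1 - ⟪γ t, u⟫ := fun t ht => sub_pos.2 (hlt t ht)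
  have hcont : ContinuousOn (fun t => 1 - ⟪γ t, u⟫) (Icc 0 1) :=
    continuousOn_const.sub (hγ.continuousOn.inner continuousOn_const)
  have hderiv : ∀ t ∈ Ioo (0:ℝ) 1, HasDerivAt (fun t => -log (1 - ⟪γ t, u⟫))
      (⟪derivWithin γ (Icc 0 1) t, u⟫ / (1 - ⟪γ t, u⟫)) t := by
    intro t ht
    have hγt : HasDerivAt γ (derivWithin γ (Icc 0 1) t) t :=
      ((hγ.differentiableOn one_ne_zero t (Ioo_subset_Icc_self ht)).hasDerivWithinAt).hasDerivAt
        (Icc_mem_nhds ht.1 ht.2)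
    have := (((hγt.inner ℝ (hasDerivAt_const t u)).const_sub 1).log
      (hpos t (Ioo_subset_Icc_self ht)).ne').fun_neg
    simpa [neg_div] using this
  rw [intervalIntegral.integral_eq_sub_of_hasDerivAt_of_le zero_le_one
    (hcont.log fun t ht => (hpos t ht).ne').fun_neg hderiv, log_div (hpos 0 (by simp)).ne'
    (hpos 1 (by simp)).ne']
  · ring
  · refine ContinuousOn.intervalIntegrable ?_
    rw [uIcc_of_le zero_le_one]
    exact ((hγ.continuousOn_derivWithin (uniqueDiffOn_Icc one_pos) le_rfl).inner
      continuousOn_const).div hcont fun t ht => (hpos t ht).ne'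

theorem inner_div_one_sub_inner_le {u : E} (hu : ‖u‖ ≤ 1) (v : E) {x : E} (hx : ‖x‖ < 1) :
    ⟪v, u⟫ / (1 - ⟪x, u⟫) ≤ ‖v‖ / (1 - ‖x‖) := by
  have hle : ∀ w : E, ⟪w, u⟫ ≤ ‖w‖ := fun w =>
    (real_inner_le_norm w u).trans (mul_le_of_le_one_right (norm_nonneg w) hu)
  calc ⟪v, u⟫ / (1 - ⟪x, u⟫) ≤ ‖v‖ / (1 - ⟪x, u⟫) :=
        div_le_div_of_nonneg_right (hle v) (by linarith [hle x])
    _ ≤ ‖v‖ / (1 - ‖x‖) :=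
        div_le_div_of_nonneg_left (norm_nonneg v) (by linarith) (by linarith [hle x])

theorem log_div_le_weightedLength {γ : ℝ → E} (hγ : ContDiffOn ℝ 1 γ (Icc 0 1))
    (hγD : ∀ t ∈ Icc (0:ℝ) 1, γ t ∈ ball (0:E) 1) {u : E} (hu : ‖u‖ ≤ 1) :
    log ((1 - ⟪γ 0, u⟫) / (1 - ⟪γ 1, u⟫)) ≤ weightedLength (fun z => (1 - ‖z‖)⁻¹) γ := by
  have hγ1 : ∀ t ∈ Icc (0:ℝ) 1, ‖γ t‖ < 1 := fun t ht => mem_ball_zero_iff.1 (hγD t ht)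
  have hγ' : ContinuousOn (derivWithin γ (Icc 0 1)) (Icc 0 1) :=
    hγ.continuousOn_derivWithin (uniqueDiffOn_Icc one_pos) le_rfl
  have hlt : ∀ t ∈ Icc (0:ℝ) 1, ⟪γ t, u⟫ < 1 := fun t ht =>
    (real_inner_le_norm _ _).trans_lt (by nlinarith [hγ1 t ht, norm_nonneg (γ t)])
  rw [← integral_inner_deriv_div_one_sub_inner hγ u hlt]
  refine intervalIntegral.integral_mono_on zero_le_one ?_ ?_ fun t ht => ?_
  · refine ContinuousOn.intervalIntegrable ?_
    rw [uIcc_of_le zero_le_one]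
    exact (hγ'.inner continuousOn_const).div
      (continuousOn_const.sub (hγ.continuousOn.inner continuousOn_const))
      fun t ht => (sub_pos.2 (hlt t ht)).ne'
  · refine ContinuousOn.intervalIntegrable ?_
    rw [uIcc_of_le zero_le_one]
    exact ((continuousOn_const.sub hγ.continuousOn.norm).inv₀
      fun t ht => (sub_pos.2 (hγ1 t ht)).ne').mul hγ'.norm
  · rw [inv_mul_eq_div]
    exact inner_div_one_sub_inner_le hu _ (hγ1 t ht)

theorem qhDist_unitBall_smul_smul {u : E} (hu : ‖u‖ = 1) {r s : ℝ} (hr : 0 ≤ r) (hrs : r ≤ s)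
    (hs : s < 1) : qhDist (ball (0:E) 1) (r • u) (s • u) = log ((1 - r) / (1 - s)) := by
  have : Nontrivial E := nontrivial_of_ne u 0 (by rintro rfl; simp at hu)
  have hinner : ∀ x : ℝ, ⟪x • u, u⟫ = x := fun x => by
    rw [real_inner_smul_left, real_inner_self_eq_norm_sq, hu, one_pow, mul_one]
  have hnorm : ∀ {x : ℝ}, 0 ≤ x → ‖x • u‖ = x := fun hx => by
    rw [norm_smul, hu, mul_one, Real.norm_of_nonneg hx]
  have hlog : ∀ {γ : ℝ → E}, γ 0 = r • u → γ 1 = s • u →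
      log ((1 - ⟪γ 0, u⟫) / (1 - ⟪γ 1, u⟫)) = log ((1 - r) / (1 - s)) := fun h0 h1 => by
    rw [h0, h1, hinner, hinner]
  set c : ℝ → ℝ := fun t => r + t * (s - r)
  have hc : ∀ t ∈ Icc (0:ℝ) 1, 0 ≤ c t ∧ c t ≤ s := fun t ht => by
    constructor <;> nlinarith [ht.1, ht.2]
  have hγ : ContDiffOn ℝ 1 (fun t => c t • u) (Icc 0 1) := by fun_prop
  have hγ' : ∀ t ∈ Icc (0:ℝ) 1, derivWithin (fun t => c t • u) (Icc 0 1) t = (s - r) • u :=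
    fun t ht => (((hasDerivAt_id t).mul_const (s - r)).const_add r |>.smul_const u
      |>.hasDerivWithinAt.derivWithin (uniqueDiffOn_Icc one_pos t ht)).trans (by simp)
  have hγD : ∀ t ∈ Icc (0:ℝ) 1, c t • u ∈ ball (0:E) 1 := fun t ht => by
    rw [mem_ball_zero_iff, hnorm (hc t ht).1]
    linarith [hc t ht]
  rw [qhDist_unitBall]
  refine confDist_eq_of_forall_le hγ (by simp [c]) (by simp [c]) hγD ?_
    fun γ hγ h0 h1 hγD => hlog h0 h1 ▸ log_div_le_weightedLength hγ hγD hu.le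
  rw [← hlog (γ := fun t => c t • u) (by simp [c]) (by simp [c]),
    ← integral_inner_deriv_div_one_sub_inner hγ u fun t ht => by linarith [hinner (c t), hc t ht]]
  refine intervalIntegral.integral_congr fun t ht => ?_
  rw [uIcc_of_le zero_le_one] at ht
  simp only [hγ' t ht, hinner, hnorm (hc t ht).1, hnorm (sub_nonneg.2 hrs), inv_mul_eq_div]

end UnitBall

section Mobius

variable {E : Type*} [NormedAddCommGroup E] [InnerProductSpace ℝ E]

theorem invPt_smul (c : ℝ) (x : E) : invPt (c • x) = c⁻¹ • invPt x := by
  rcases eq_or_ne c 0 with rfl | hc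
  · simp [invPt]
  rw [invPt, invPt, norm_smul, mul_pow, Real.norm_eq_abs, sq_abs, smul_smul, smul_smul]
  field_simp

theorem reflMap_smul_self {a : E} (ha : a ≠ 0) (c : ℝ) : reflMap a (c • a) = (-c) • a := by
  rw [reflMap, real_inner_smul_left, real_inner_self_eq_norm_sq, mul_div_assoc,
    mul_div_cancel_right₀ _ (by simpa using ha), ← sub_smul]
  ring_nf

theorem TMap_smul_self {a : E} (ha : a ≠ 0) {s : ℝ} (hs : s * ‖a‖ ^ 2 ≠ 1) :
    TMap a (s • a) = ((s - 1) / (1 - s * ‖a‖ ^ 2)) • a := by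
  have hinv : invPt a = (‖a‖ ^ 2)⁻¹ • a := rfl
  rw [TMap, if_neg ha, sigmaMap, hinv, ← sub_smul, invPt_smul, hinv, smul_smul, smul_smul,
    ← add_smul, reflMap_smul_self ha]
  have hA : ‖a‖ ^ 2 ≠ 0 := by simpa using ha
  congr 1
  generalize ‖a‖ ^ 2 = A at hA hs ⊢
  have hsA : s - A⁻¹ = (s * A - 1) / A := by field_simp
  have h1 : A * s - 1 ≠ 0 := sub_ne_zero.2 (by rwa [mul_comm])
  have h2 : 1 - A * s ≠ 0 := sub_ne_zero.2 (by rw [mul_comm]; exact Ne.symm hs)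
  rw [hsA]
  field_simp
  ring

theorem qhDist_unitBall_smul_smul_self {a : E} (ha : a ≠ 0) {r s : ℝ} (hr : 0 ≤ r) (hrs : r ≤ s)
    (hs : s * ‖a‖ < 1) :
    qhDist (ball (0:E) 1) (r • a) (s • a) = log ((1 - r * ‖a‖) / (1 - s * ‖a‖)) := by
  have hmul : ∀ x : ℝ, x • a = (x * ‖a‖) • (‖a‖⁻¹ • a) := fun x => by
    rw [smul_smul, mul_assoc, mul_inv_cancel₀ (norm_ne_zero_iff.2 ha), mul_one]
  rw [hmul r, hmul s]
  exact qhDist_unitBall_smul_smul (norm_smul_inv_norm ha) (by positivity) (by gcongr) hs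

theorem qhDist_unitBall_self_one_add_smul {a : E} (ha : a ≠ 0) {t : ℝ} (ht : 0 ≤ t)
    (hlt : t * ‖a‖ < 1 - ‖a‖) :
    qhDist (ball (0:E) 1) a ((1 + t) • a) = log (1 + t * ‖a‖ / (1 - ‖a‖ - t * ‖a‖)) := by
  have h := qhDist_unitBall_smul_smul_self ha zero_le_one (by linarith)
    (by linarith : (1 + t) * ‖a‖ < 1)
  have hD : 1 - ‖a‖ - t * ‖a‖ ≠ 0 := by linarith
  rw [one_smul] at h
  rw [h, one_add_div hD]
  congr 1
  ring

theorem qhDist_unitBall_TMap_self_one_add_smul {a : E} (ha : a ≠ 0) {t : ℝ} (ht : 0 ≤ t)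
    (hlt : t * ‖a‖ < 1 - ‖a‖) :
    qhDist (ball (0:E) 1) (TMap a a) (TMap a ((1 + t) • a)) =
      log (1 + t * ‖a‖ / (1 - t * ‖a‖ - (1 + t) * ‖a‖ ^ 2)) := by
  have hA : (1 + t) * ‖a‖ ^ 2 < ‖a‖ := by nlinarith [norm_pos_iff.2 ha]
  have hA1 : 0 < 1 - (1 + t) * ‖a‖ ^ 2 := by linarith [mul_nonneg ht (norm_nonneg a)]
  have hD : 1 - t * ‖a‖ - (1 + t) * ‖a‖ ^ 2 ≠ 0 := by linarith
  have h0 : TMap a a = (0:ℝ) • a := by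
    simpa using TMap_smul_self ha (s := 1) (by nlinarith)
  have h1 : TMap a ((1 + t) • a) = (t / (1 - (1 + t) * ‖a‖ ^ 2)) • a := by
    rw [TMap_smul_self ha (by linarith : (1 + t) * ‖a‖ ^ 2 < 1).ne]
    congr 1
    ring
  have hs : t / (1 - (1 + t) * ‖a‖ ^ 2) * ‖a‖ < 1 := by
    rw [div_mul_eq_mul_div, div_lt_one hA1]
    linarith
  rw [h0, h1, qhDist_unitBall_smul_smul_self ha le_rfl (by positivity) hs, zero_mul, sub_zero,
    div_mul_eq_mul_div, one_sub_div hA1.ne', one_div_div, one_add_div hD]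
  congr 1
  ring

end Mobius

theorem tendsto_div_nhdsNE_of_hasDerivAt {f g : ℝ → ℝ} {f' g' x : ℝ} (hf : HasDerivAt f f' x)
    (hg : HasDerivAt g g' x) (hf0 : f x = 0) (hg0 : g x = 0) (hg' : g' ≠ 0) :
    Tendsto (fun t => f t / g t) (𝓝[≠] x) (𝓝 (f' / g')) := by
  refine ((hasDerivAt_iff_tendsto_slope.1 hf).div (hasDerivAt_iff_tendsto_slope.1 hg) hg').congr' ?_
  filter_upwards [self_mem_nhdsWithin] with t ht
  simp only [Pi.div_apply, slope_def_field, hf0, hg0, sub_zero]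
  exact div_div_div_cancel_right₀ (sub_ne_zero.2 ht) _ _

theorem hasDerivAt_log_one_add_mul_div {d : ℝ → ℝ} (hd : DifferentiableAt ℝ d 0) (hd0 : d 0 ≠ 0)
    (α : ℝ) : HasDerivAt (fun t => log (1 + t * α / d t)) (α / d 0) 0 := by
  have := ((((hasDerivAt_id 0).mul_const α).div hd.hasDerivAt hd0).const_add 1).log (by simp)
  simpa [sq, mul_div_mul_right, hd0] using this

theorem tendsto_log_ratio {b : ℝ} (hb0 : 0 < b) (hb1 : b < 1) :
    Tendsto (fun t => log (1 + t * b / (1 - t * b - (1 + t) * b ^ 2)) /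
      log (1 + t * b / (1 - b - t * b))) (𝓝[>] 0) (𝓝 (1 / (1 + b))) := by
  have h1 : (1 : ℝ) - b ^ 2 ≠ 0 := by nlinarith
  have h2 : (1 : ℝ) - b ≠ 0 := by linarith
  have hlim := tendsto_div_nhdsNE_of_hasDerivAt
    (hasDerivAt_log_one_add_mul_div (d := fun t => 1 - t * b - (1 + t) * b ^ 2) (by fun_prop)
      (by simpa using h1) b)
    (hasDerivAt_log_one_add_mul_div (d := fun t => 1 - b - t * b) (by fun_prop)
      (by simpa using h2) b)
    (by simp) (by simp) (by simpa using div_ne_zero hb0.ne' h2)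
  convert hlim.mono_left (nhdsGT_le_nhdsNE 0) using 2
  have h3 : (1 : ℝ) + b ≠ 0 := by linarith
  rw [zero_mul, add_zero, one_mul, sub_zero, sub_zero,
    show (1 : ℝ) - b ^ 2 = (1 - b) * (1 + b) by ring]
  field_simp

theorem qhDist_radial_formulas_and_limit_general {n : ℕ}
    (a : EuclideanSpace ℝ (Fin n)) (ha0 : 0 < ‖a‖) (ha1 : ‖a‖ < 1) :
    (∀ t : ℝ, 0 < t → (1 + t) • a ∈ ball (0 : EuclideanSpace ℝ (Fin n)) 1 →
      t * ‖a‖ < 1 - ‖a‖ →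
      qhDist (ball (0 : EuclideanSpace ℝ (Fin n)) 1) a ((1 + t) • a) =
        Real.log (1 + t * ‖a‖ / (1 - ‖a‖ - t * ‖a‖)) ∧
      qhDist (ball (0 : EuclideanSpace ℝ (Fin n)) 1) (TMap a a) (TMap a ((1 + t) • a)) =
        Real.log (1 + t * ‖a‖ / (1 - t * ‖a‖ - (1 + t) * ‖a‖ ^ 2))) ∧
    Tendsto (fun t : ℝ =>
        qhDist (ball (0 : EuclideanSpace ℝ (Fin n)) 1) (TMap a a) (TMap a ((1 + t) • a)) /
          qhDist (ball (0 : EuclideanSpace ℝ (Fin n)) 1) a ((1 + t) • a))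
      (nhdsWithin 0 (Ioi 0)) (nhds (1 / (1 + ‖a‖))) := by
  have ha : a ≠ 0 := norm_pos_iff.1 ha0
  refine ⟨fun t ht _ hlt => ⟨qhDist_unitBall_self_one_add_smul ha ht.le hlt,
    qhDist_unitBall_TMap_self_one_add_smul ha ht.le hlt⟩, (tendsto_log_ratio ha0 ha1).congr' ?_⟩
  have hsmall : ∀ᶠ t in 𝓝[>] 0, t * ‖a‖ < 1 - ‖a‖ :=
    eventually_nhdsWithin_of_eventually_nhds <|
      ((continuous_id.mul continuous_const).tendsto' 0 0 (by simp)).eventually_lt_const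
        (by linarith)
  filter_upwards [self_mem_nhdsWithin, hsmall] with t ht hlt
  rw [qhDist_unitBall_self_one_add_smul ha (le_of_lt ht) hlt,
    qhDist_unitBall_TMap_self_one_add_smul ha (le_of_lt ht) hlt]

/-- Explicit quasihyperbolic distances along the radius through `a`, and the
limit of the distortion ratio as `t → 0+`, showing sharpness of the constant `1/(1+|a|)`. -/
theorem qhDist_radial_formulas_and_limit {n : ℕ} (hn : 2 ≤ n)
    (a : EuclideanSpace ℝ (Fin n)) (ha0 : 0 < ‖a‖) (ha1 : ‖a‖ < 1) :
    (∀ t : ℝ, 0 < t → (1 + t) • a ∈ ball (0 : EuclideanSpace ℝ (Fin n)) 1 →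
      t * ‖a‖ < 1 - ‖a‖ →
      qhDist (ball (0 : EuclideanSpace ℝ (Fin n)) 1) a ((1 + t) • a) =
        Real.log (1 + t * ‖a‖ / (1 - ‖a‖ - t * ‖a‖)) ∧
      qhDist (ball (0 : EuclideanSpace ℝ (Fin n)) 1) (TMap a a) (TMap a ((1 + t) • a)) =
        Real.log (1 + t * ‖a‖ / (1 - t * ‖a‖ - (1 + t) * ‖a‖ ^ 2))) ∧
    Tendsto (fun t : ℝ =>
        qhDist (ball (0 : EuclideanSpace ℝ (Fin n)) 1) (TMap a a) (TMap a ((1 + t) • a)) /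
          qhDist (ball (0 : EuclideanSpace ℝ (Fin n)) 1) a ((1 + t) • a))
      (nhdsWithin 0 (Ioi 0)) (nhds (1 / (1 + ‖a‖))) :=
  qhDist_radial_formulas_and_limit_general a ha0 ha1
end

section
/- Let n ≥ 2, a ∈ Bⁿ with 0 < |a| < 1, and e_a = a/|a|. For t ∈ (0,1), the ratio j_{Bⁿ}(T_a(−t e_a), T_a(t e_a)) / j_{Bⁿ}(−t e_a, t e_a) equals 1 + arctanh(|a|t)/arctanh(t); this expression is strictly decreasing in t on (0,1) with range (1, 1+|a|), and consequently sup_{t∈(0,1)} j_{Bⁿ}(T_a(−t e_a), T_a(t e_a)) / j_{Bⁿ}(−t e_a, t e_a) = 1+|a|. -/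
/-!
On the diameter through `a`, `T_a` acts as the one-dimensional Möbius map
`s ↦ (s - |a|) / (1 - |a| s)`, and for points `-u e`, `v e` of a diameter with `|v| ≤ u` the
distance `j` is `log ((1 + v) / (1 - u))`. So the denominator is `2 arctanh t` and the numerator
is `2 arctanh t + 2 arctanh (|a| t)`. The derivative of `arctanh (α t) / arctanh t` has the sign of
`α (1 - t²) arctanh t - (1 - α² t²) arctanh (α t)`, which vanishes at `0` and decreases.
The quotient tends to `α` at `0` (l'Hôpital) and to `0` at `1`, where `arctanh` blows up, so by
continuity its range is `(0, α)`.
-/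

open Metric Set Real Filter

/-- The distance-ratio metric `j_D(x,y) = log (1 + |x-y| / min (d(x,∂D), d(y,∂D)))`. -/
noncomputable def jDist {E : Type*} [NormedAddCommGroup E] [NormedSpace ℝ E]
    (D : Set E) (x y : E) : ℝ :=
  Real.log (1 + dist x y / min (infDist x (frontier D)) (infDist y (frontier D)))

/-- The inverse hyperbolic tangent, `arctanh x = (1/2) log ((1+x)/(1-x))`. -/
noncomputable def arctanh (x : ℝ) : ℝ := (1 / 2) * Real.log ((1 + x) / (1 - x))

open Topology

theorem strictAntiOn_of_hasDerivAt_neg {D : Set ℝ} (hD : Convex ℝ D) {f f' : ℝ → ℝ}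
    (hf : ∀ x ∈ D, HasDerivAt f (f' x) x) (hf' : ∀ x ∈ interior D, f' x < 0) :
    StrictAntiOn f D :=
  strictAntiOn_of_hasDerivWithinAt_neg hD
    (fun x hx => (hf x hx).continuousAt.continuousWithinAt)
    (fun x hx => (hf x (interior_subset hx)).hasDerivWithinAt) hf'

theorem StrictAntiOn.image_Ioo_of_tendsto {f : ℝ → ℝ} {a b A B : ℝ} (hab : a < b)
    (hf : StrictAntiOn f (Ioo a b)) (hcont : ContinuousOn f (Ioo a b))
    (ha : Tendsto f (𝓝[>] a) (𝓝 A)) (hb : Tendsto f (𝓝[<] b) (𝓝 B)) :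
    f '' Ioo a b = Ioo B A := by
  apply Subset.antisymm
  · rintro _ ⟨t, ht, rfl⟩
    obtain ⟨s, has, hst⟩ := exists_between ht.1
    obtain ⟨u, htu, hub⟩ := exists_between ht.2
    have hsA : f s ≤ A := ge_of_tendsto ha <| mem_of_superset (Ioo_mem_nhdsGT has)
      fun r hr => (hf ⟨hr.1, hr.2.trans (hst.trans ht.2)⟩ ⟨has, hst.trans ht.2⟩ hr.2).le
    have hBu : B ≤ f u := le_of_tendsto hb <| mem_of_superset (Ioo_mem_nhdsLT hub)
      fun r hr => (hf ⟨ht.1.trans htu, hub⟩ ⟨ht.1.trans (htu.trans hr.1), hr.2⟩ hr.1).le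
    exact ⟨hBu.trans_lt (hf ht ⟨ht.1.trans htu, hub⟩ htu),
      (hf ⟨has, hst.trans ht.2⟩ ht hst).trans_le hsA⟩
  · intro c hc
    obtain ⟨t₁, hct₁, ht₁⟩ := ((ha.eventually (lt_mem_nhds hc.2)).and (Ioo_mem_nhdsGT hab)).exists
    obtain ⟨t₂, hct₂, ht₂⟩ := ((hb.eventually (gt_mem_nhds hc.1)).and (Ioo_mem_nhdsLT hab)).exists
    exact hcont.surjOn_Icc ht₂ ht₁ ⟨hct₂.le, hct₁.le⟩

theorem arctanh_eq_artanh {x : ℝ} (hx : x ∈ Icc (-1) 1) : arctanh x = artanh x := by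
  rw [arctanh, artanh_eq_half_log hx]

theorem arctanh_zero : arctanh 0 = 0 := by
  simp [arctanh]

theorem arctanh_pos {x : ℝ} (hx : x ∈ Ioo 0 1) : 0 < arctanh x := by
  rw [arctanh_eq_artanh ⟨by linarith [hx.1], hx.2.le⟩]
  exact artanh_pos hx

theorem arctanh_lt_arctanh {x y : ℝ} (hx : -1 < x) (hy : y < 1) (hxy : x < y) :
    arctanh x < arctanh y := by
  rw [arctanh_eq_artanh ⟨hx.le, by linarith⟩, arctanh_eq_artanh ⟨by linarith, hy.le⟩]
  exact artanh_lt_artanh hx hy hxy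

theorem hasDerivAt_arctanh {x : ℝ} (hx : x ∈ Ioo (-1) 1) :
    HasDerivAt arctanh (1 - x ^ 2)⁻¹ x := by
  have h₁ : 1 - x ≠ 0 := by linarith [hx.2]
  have h₂ : 1 + x ≠ 0 := by linarith [hx.1]
  have h₃ : 1 - x ^ 2 ≠ 0 := by
    rw [show 1 - x ^ 2 = (1 - x) * (1 + x) by ring]
    exact mul_ne_zero h₁ h₂
  have hq : HasDerivAt (fun y => (1 + y) / (1 - y))
      ((1 * (1 - x) - (1 + x) * (-1)) / (1 - x) ^ 2) x :=
    ((hasDerivAt_id x).const_add 1).div ((hasDerivAt_id x).const_sub 1) h₁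
  refine ((hq.log (div_ne_zero h₂ h₁)).const_mul (1 / 2)).congr_deriv ?_
  field_simp
  ring

theorem hasDerivAt_arctanh_const_mul {α x : ℝ} (hx : α * x ∈ Ioo (-1) 1) :
    HasDerivAt (fun t => arctanh (α * t)) (α / (1 - α ^ 2 * x ^ 2)) x :=
  ((hasDerivAt_arctanh hx).comp x ((hasDerivAt_id x).const_mul α)).congr_deriv (by ring)

theorem tendsto_arctanh_nhdsLT_one : Tendsto arctanh (𝓝[<] 1) atTop := by
  have hgap : Tendsto (fun t : ℝ => 1 - t) (𝓝[<] 1) (𝓝[>] 0) :=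
    tendsto_nhdsWithin_of_tendsto_nhds_of_eventually_within _
      (tendsto_nhdsWithin_of_tendsto_nhds (by simpa using (continuous_sub_left (1 : ℝ)).tendsto 1))
      (eventually_nhdsWithin_of_forall fun t (ht : t < 1) => sub_pos.mpr ht)
  have htwo : Tendsto (fun t : ℝ => 1 + t) (𝓝[<] 1) (𝓝 2) :=
    tendsto_nhdsWithin_of_tendsto_nhds (by simpa [one_add_one_eq_two] using
      (continuous_const_add (1 : ℝ)).tendsto 1)
  have hquot := htwo.pos_mul_atTop two_pos (tendsto_inv_nhdsGT_zero.comp hgap)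
  refine ((tendsto_log_atTop.comp hquot).const_mul_atTop one_half_pos).congr fun t => ?_
  simp [arctanh, div_eq_mul_inv]

section Ratio

variable {α : ℝ}

theorem mul_one_sub_sq_mul_arctanh_lt (hα : α ∈ Ioo 0 1) {t : ℝ} (ht : t ∈ Ioo 0 1) :
    α * (1 - t ^ 2) * arctanh t < (1 - α ^ 2 * t ^ 2) * arctanh (α * t) := by
  obtain ⟨hα0, hα1⟩ := hα
  have hderiv : ∀ x ∈ Ico (0 : ℝ) 1, HasDerivAt
      (fun t => α * (1 - t ^ 2) * arctanh t - (1 - α ^ 2 * t ^ 2) * arctanh (α * t))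
      (2 * α * x * (α * arctanh (α * x) - arctanh x)) x := by
    intro x ⟨hx0, hx1⟩
    have hαx : α * x ∈ Ioo (-1) 1 := ⟨by nlinarith, by nlinarith⟩
    have h₁ : (1 : ℝ) - x ^ 2 ≠ 0 := by nlinarith
    have h₂ : (1 : ℝ) - α ^ 2 * x ^ 2 ≠ 0 := by nlinarith [hαx.1, hαx.2]
    have hA : HasDerivAt (fun t : ℝ => α * (1 - t ^ 2)) (α * (0 - 2 * x)) x := by
      simpa using ((hasDerivAt_pow 2 x).const_sub 1).const_mul α
    have hC : HasDerivAt (fun t : ℝ => 1 - α ^ 2 * t ^ 2) (0 - α ^ 2 * (2 * x)) x := by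
      simpa using ((hasDerivAt_pow 2 x).const_mul (α ^ 2)).const_sub 1
    refine ((hA.mul (hasDerivAt_arctanh ⟨by linarith, hx1⟩)).sub
      (hC.mul (hasDerivAt_arctanh_const_mul hαx))).congr_deriv ?_
    field_simp
    ring
  have hanti := strictAntiOn_of_hasDerivAt_neg (convex_Ico 0 1) hderiv fun x hx => by
    rw [interior_Ico] at hx
    have hαx : α * x ∈ Ioo 0 1 := ⟨mul_pos hα0 hx.1, by nlinarith [hx.2]⟩
    have hmono : arctanh (α * x) < arctanh x :=
      arctanh_lt_arctanh (by linarith [hαx.1]) hx.2 (by nlinarith [hx.1])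
    have hsmall : α * arctanh (α * x) < arctanh (α * x) :=
      mul_lt_of_lt_one_left (arctanh_pos hαx) hα1
    exact mul_neg_of_pos_of_neg (by nlinarith [hx.1]) (by linarith)
  have := hanti ⟨le_rfl, one_pos⟩ ⟨ht.1.le, ht.2⟩ ht.1
  simp only [mul_zero, arctanh_zero, sub_zero] at this
  linarith

theorem strictAntiOn_arctanh_mul_div_arctanh (hα : α ∈ Ioo 0 1) :
    StrictAntiOn (fun t => arctanh (α * t) / arctanh t) (Ioo 0 1) := by
  refine strictAntiOn_of_hasDerivAt_neg (convex_Ioo 0 1)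
    (fun x hx => (hasDerivAt_arctanh_const_mul ?_).div
      (hasDerivAt_arctanh ⟨by linarith [hx.1], hx.2⟩) (arctanh_pos hx).ne') fun x hx => ?_
  · exact ⟨by nlinarith [hα.1, hx.1], by nlinarith [hα.2, hx.1, hx.2]⟩
  rw [interior_Ioo] at hx
  obtain ⟨hx0, hx1⟩ := hx
  have h₁ : (0 : ℝ) < 1 - x ^ 2 := by nlinarith
  have hαx : α * x < 1 := by nlinarith [hα.2]
  have h₂ : (0 : ℝ) < 1 - α ^ 2 * x ^ 2 := by nlinarith [mul_pos hα.1 hx0]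
  have hkey := mul_one_sub_sq_mul_arctanh_lt hα ⟨hx0, hx1⟩
  refine div_neg_of_neg_of_pos ?_ (pow_pos (arctanh_pos ⟨hx0, hx1⟩) 2)
  rw [show α / (1 - α ^ 2 * x ^ 2) * arctanh x - arctanh (α * x) * (1 - x ^ 2)⁻¹
      = (α * (1 - x ^ 2) * arctanh x - (1 - α ^ 2 * x ^ 2) * arctanh (α * x))
        / ((1 - α ^ 2 * x ^ 2) * (1 - x ^ 2)) by field_simp]
  exact div_neg_of_neg_of_pos (by linarith) (mul_pos h₂ h₁)

theorem continuousOn_arctanh_mul_div_arctanh (hα : α ∈ Icc (-1) 1) :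
    ContinuousOn (fun t => arctanh (α * t) / arctanh t) (Ioo 0 1) := fun x hx =>
  have hαx : α * x ∈ Ioo (-1) 1 :=
    ⟨by nlinarith [hα.1, hx.1, hx.2], by nlinarith [hα.2, hx.1, hx.2]⟩
  ((hasDerivAt_arctanh_const_mul hαx).continuousAt.div
    (hasDerivAt_arctanh ⟨by linarith [hx.1], hx.2⟩).continuousAt
    (arctanh_pos hx).ne').continuousWithinAt

theorem tendsto_arctanh_mul_div_arctanh_nhdsGT_zero (α : ℝ) :
    Tendsto (fun t => arctanh (α * t) / arctanh t) (𝓝[>] 0) (𝓝 α) := by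
  have hnear : ∀ᶠ x in 𝓝[>] (0 : ℝ), x ∈ Ioo (-1) 1 ∧ α * x ∈ Ioo (-1) 1 :=
    nhdsWithin_le_nhds <| Filter.Eventually.and (Ioo_mem_nhds (by norm_num) (by norm_num)) <|
      (continuous_const_mul α).tendsto' 0 0 (mul_zero α) |>.eventually
        (Ioo_mem_nhds (by norm_num) (by norm_num))
  have hzero : ∀ {β : ℝ}, Tendsto (fun t => arctanh (β * t)) (𝓝[>] 0) (𝓝 0) := fun {β} => by
    simpa [arctanh_zero] using
      (hasDerivAt_arctanh_const_mul (α := β) (x := 0) (by simp)).continuousAt.tendsto.mono_left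
        nhdsWithin_le_nhds
  have hslope : ContinuousAt (fun x : ℝ => α / (1 - α ^ 2 * x ^ 2) / (1 - x ^ 2)⁻¹) 0 := by
    fun_prop (disch := norm_num)
  refine HasDerivAt.lhopital_zero_nhdsGT (hnear.mono fun x hx => hasDerivAt_arctanh_const_mul hx.2)
    (hnear.mono fun x hx => hasDerivAt_arctanh hx.1)
    (hnear.mono fun x hx => inv_ne_zero (by nlinarith [hx.1.1, hx.1.2])) hzero ?_ ?_
  · simpa using hzero (β := 1)
  · simpa using hslope.tendsto.mono_left nhdsWithin_le_nhds

theorem tendsto_arctanh_mul_div_arctanh_nhdsLT_one (hα : α ∈ Ioo (-1) 1) :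
    Tendsto (fun t => arctanh (α * t) / arctanh t) (𝓝[<] 1) (𝓝 0) := by
  have hnum : Tendsto (fun t => arctanh (α * t)) (𝓝[<] 1) (𝓝 (arctanh α)) :=
    (hasDerivAt_arctanh hα).continuousAt.tendsto.comp <| tendsto_nhdsWithin_of_tendsto_nhds <|
      (continuous_const_mul α).tendsto' 1 α (mul_one α)
  exact hnum.div_atTop tendsto_arctanh_nhdsLT_one

theorem image_one_add_arctanh_mul_div_arctanh (hα : α ∈ Ioo 0 1) :
    (fun t => 1 + arctanh (α * t) / arctanh t) '' Ioo 0 1 = Ioo 1 (1 + α) := by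
  simpa using StrictAntiOn.image_Ioo_of_tendsto one_pos
    ((strictAntiOn_arctanh_mul_div_arctanh hα).const_add 1)
    (continuousOn_const.add (continuousOn_arctanh_mul_div_arctanh ⟨by linarith [hα.1], hα.2.le⟩))
    ((tendsto_arctanh_mul_div_arctanh_nhdsGT_zero α).const_add 1)
    ((tendsto_arctanh_mul_div_arctanh_nhdsLT_one ⟨by linarith [hα.1], hα.2⟩).const_add 1)

end Ratio

section DistanceRatio

variable {F : Type*} [NormedAddCommGroup F] [NormedSpace ℝ F]

theorem infDist_sphere_zero_one [Nontrivial F] {z : F} (hz : ‖z‖ ≤ 1) :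
    infDist z (sphere 0 1) = 1 - ‖z‖ := by
  obtain ⟨w, hw, hzw⟩ : ∃ w ∈ sphere (0 : F) 1, ‖z‖ • w = z := by
    rcases eq_or_ne z 0 with rfl | hz0
    · obtain ⟨w, hw⟩ := exists_norm_eq F zero_le_one
      exact ⟨w, by simpa using hw, by simp⟩
    · have hz' : ‖z‖ ≠ 0 := norm_ne_zero_iff.mpr hz0
      exact ⟨‖z‖⁻¹ • z, by simp [norm_smul, hz'], smul_inv_smul₀ hz' z⟩
  rw [mem_sphere_zero_iff_norm] at hw
  refine le_antisymm ?_ ((le_infDist ⟨w, by simpa using hw⟩).mpr fun y hy => ?_)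
  · calc infDist z (sphere 0 1) ≤ dist z w := infDist_le_dist_of_mem (by simpa using hw)
      _ = 1 - ‖z‖ := by
        conv_lhs => rw [dist_eq_norm, ← hzw]
        rw [show ‖z‖ • w - w = (‖z‖ - 1) • w by rw [sub_smul, one_smul], norm_smul, hw, mul_one,
          norm_eq_abs, abs_of_nonpos (by linarith), neg_sub]
  · rw [mem_sphere_zero_iff_norm] at hy
    rw [dist_comm, dist_eq_norm, ← hy]
    exact norm_sub_norm_le y z

theorem jDist_ball_zero_one [Nontrivial F] {x y : F} (hx : ‖x‖ ≤ 1) (hy : ‖y‖ ≤ 1) :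
    jDist (ball 0 1) x y = log (1 + dist x y / (1 - max ‖x‖ ‖y‖)) := by
  rw [jDist, frontier_ball 0 one_ne_zero, infDist_sphere_zero_one hx, infDist_sphere_zero_one hy,
    min_sub_sub_left]

theorem jDist_ball_zero_one_neg_smul_smul {e : F} (he : ‖e‖ = 1) {u v : ℝ} (hv : |v| ≤ u)
    (hu : u < 1) : jDist (ball 0 1) (-(u • e)) (v • e) = log ((1 + v) / (1 - u)) := by
  have : Nontrivial F := ⟨e, 0, norm_ne_zero_iff.mp (by rw [he]; exact one_ne_zero)⟩
  have hu0 : 0 ≤ u := (abs_nonneg v).trans hv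
  have hnu : ‖-(u • e)‖ = u := by
    rw [norm_neg, norm_smul, he, mul_one, norm_eq_abs, abs_of_nonneg hu0]
  have hnv : ‖v • e‖ = |v| := by rw [norm_smul, he, mul_one, norm_eq_abs]
  have hdist : dist (-(u • e)) (v • e) = u + v := by
    rw [dist_eq_norm, ← neg_smul, ← sub_smul, norm_smul, he, mul_one, norm_eq_abs,
      abs_of_nonpos (by linarith [neg_abs_le v]), neg_sub, sub_neg_eq_add, add_comm]
  rw [jDist_ball_zero_one (hnu.trans_le hu.le) (hnv.trans_le (hv.trans hu.le)), hdist, hnu, hnv,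
    max_eq_left hv]
  congr 1
  field_simp [(sub_pos.mpr hu).ne']
  ring

theorem jDist_ball_zero_one_neg_smul_self {e : F} (he : ‖e‖ = 1) {t : ℝ} (ht0 : 0 ≤ t)
    (ht1 : t < 1) :
    jDist (ball 0 1) (-(t • e)) (t • e) = 2 * arctanh t := by
  rw [jDist_ball_zero_one_neg_smul_smul he (abs_of_nonneg ht0).le ht1, arctanh]
  ring

end DistanceRatio

section Mobius

variable {E : Type*} [NormedAddCommGroup E] [InnerProductSpace ℝ E] {a e : E}

theorem invPt_smul_of_norm_eq_one (he : ‖e‖ = 1) (c : ℝ) : invPt (c • e) = c⁻¹ • e := by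
  rw [invPt, norm_smul, he, mul_one, norm_eq_abs, sq_abs, smul_smul]
  rcases eq_or_ne c 0 with rfl | hc
  · simp
  · field_simp

theorem reflMap_smul_smul_of_norm_eq_one (he : ‖e‖ = 1) {ρ : ℝ} (hρ : ρ ≠ 0) (c : ℝ) :
    reflMap (ρ • e) (c • e) = -(c • e) := by
  rw [reflMap, real_inner_smul_left, real_inner_smul_right, real_inner_self_eq_norm_sq,
    norm_smul, he, mul_one, norm_eq_abs, sq_abs, smul_smul, ← neg_smul, ← sub_smul]
  congr 1
  field_simp
  ring

theorem sigmaMap_smul_smul_of_norm_eq_one (he : ‖e‖ = 1) (ρ s : ℝ) :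
    sigmaMap (ρ • e) (s • e) = (ρ⁻¹ + ((ρ ^ 2)⁻¹ - 1) * (s - ρ⁻¹)⁻¹) • e := by
  rw [sigmaMap, invPt_smul_of_norm_eq_one he, ← sub_smul, invPt_smul_of_norm_eq_one he,
    norm_smul, he, mul_one, norm_eq_abs, sq_abs, smul_smul, ← add_smul]

theorem TMap_smul_smul_of_norm_eq_one (he : ‖e‖ = 1) {ρ s : ℝ} (hρ : ρ ≠ 0) (hs : ρ * s ≠ 1) :
    TMap (ρ • e) (s • e) = ((s - ρ) / (1 - ρ * s)) • e := by
  have hρe : ρ • e ≠ 0 := smul_ne_zero hρ (norm_ne_zero_iff.mp (by rw [he]; exact one_ne_zero))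
  rw [TMap, if_neg hρe, sigmaMap_smul_smul_of_norm_eq_one he,
    reflMap_smul_smul_of_norm_eq_one he hρ, ← neg_smul]
  have h₁ : s - ρ⁻¹ ≠ 0 := fun h => hs (by field_simp at h; linarith)
  have h₂ : 1 - ρ * s ≠ 0 := sub_ne_zero.mpr hs.symm
  congr 1
  field_simp
  ring

theorem TMap_smul_inv_norm_smul (ha : a ≠ 0) {s : ℝ} (hs : ‖a‖ * s ≠ 1) :
    TMap a (s • (‖a‖⁻¹ • a)) = ((s - ‖a‖) / (1 - ‖a‖ * s)) • (‖a‖⁻¹ • a) := by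
  have ha' : ‖a‖ ≠ 0 := norm_ne_zero_iff.mpr ha
  have he : ‖‖a‖⁻¹ • a‖ = 1 := by simpa using norm_smul_inv_norm (𝕜 := ℝ) ha
  have h := TMap_smul_smul_of_norm_eq_one he ha' hs
  rwa [smul_inv_smul₀ ha'] at h

theorem jDist_ball_TMap_neg_smul_smul (ha : a ≠ 0) (ha1 : ‖a‖ < 1) {t : ℝ} (ht0 : 0 ≤ t)
    (ht1 : t < 1) :
    jDist (ball 0 1) (TMap a (-(t • (‖a‖⁻¹ • a)))) (TMap a (t • (‖a‖⁻¹ • a))) =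
      2 * arctanh t + 2 * arctanh (‖a‖ * t) := by
  have ha0 : 0 < ‖a‖ := norm_pos_iff.mpr ha
  have he : ‖‖a‖⁻¹ • a‖ = 1 := by simpa using norm_smul_inv_norm (𝕜 := ℝ) ha
  have hplus : 0 < 1 + ‖a‖ * t := by positivity
  have hminus : 0 < 1 - ‖a‖ * t := by nlinarith
  have hneg : TMap a (-(t • (‖a‖⁻¹ • a))) = -(((t + ‖a‖) / (1 + ‖a‖ * t)) • (‖a‖⁻¹ • a)) := by
    rw [← neg_smul, TMap_smul_inv_norm_smul ha (by nlinarith), ← neg_smul, mul_neg,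
      sub_neg_eq_add, ← neg_add', neg_div]
  rw [hneg, TMap_smul_inv_norm_smul ha (sub_pos.mp hminus).ne,
    jDist_ball_zero_one_neg_smul_smul he ?_ ?_]
  · have h₁ : (0 : ℝ) < 1 - t := by linarith
    have h₂ : (0 : ℝ) < 1 - ‖a‖ := by linarith
    have hnum : 1 + (t - ‖a‖) / (1 - ‖a‖ * t) = (1 + t) * (1 - ‖a‖) / (1 - ‖a‖ * t) := by
      rw [eq_div_iff hminus.ne', add_mul, div_mul_cancel₀ _ hminus.ne']
      ring
    have hden : 1 - (t + ‖a‖) / (1 + ‖a‖ * t) = (1 - t) * (1 - ‖a‖) / (1 + ‖a‖ * t) := by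
      field_simp
      ring
    rw [hnum, hden, show (1 + t) * (1 - ‖a‖) / (1 - ‖a‖ * t) / ((1 - t) * (1 - ‖a‖) /
        (1 + ‖a‖ * t)) = (1 + t) / (1 - t) * ((1 + ‖a‖ * t) / (1 - ‖a‖ * t)) by field_simp,
      log_mul (by positivity) (by positivity), arctanh, arctanh]
    ring
  · rw [abs_le, div_le_div_iff₀ hminus hplus, ← neg_div, div_le_div_iff₀ hplus hminus]
    constructor
    · nlinarith [mul_nonneg ht0 (sub_nonneg.mpr (pow_le_one₀ (n := 2) ha0.le ha1.le))]
    · nlinarith [mul_nonneg ha0.le (sub_nonneg.mpr (pow_le_one₀ (n := 2) ht0 ht1.le))]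
  · rw [div_lt_one hplus]
    nlinarith

theorem jDist_ball_TMap_div_jDist_ball (ha : a ≠ 0) (ha1 : ‖a‖ < 1) {t : ℝ} (ht : t ∈ Ioo 0 1) :
    jDist (ball 0 1) (TMap a (-(t • (‖a‖⁻¹ • a)))) (TMap a (t • (‖a‖⁻¹ • a))) /
        jDist (ball 0 1) (-(t • (‖a‖⁻¹ • a))) (t • (‖a‖⁻¹ • a)) =
      1 + arctanh (‖a‖ * t) / arctanh t := by
  have he : ‖‖a‖⁻¹ • a‖ = 1 := by simpa using norm_smul_inv_norm (𝕜 := ℝ) ha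
  rw [jDist_ball_TMap_neg_smul_smul ha ha1 ht.1.le ht.2,
    jDist_ball_zero_one_neg_smul_self he ht.1.le ht.2]
  field_simp [(arctanh_pos ht).ne']

end Mobius

theorem jDist_TMap_antipodal_ratio_general {n : ℕ}
    (a : EuclideanSpace ℝ (Fin n)) (ha0 : 0 < ‖a‖) (ha1 : ‖a‖ < 1) :
    (∀ t ∈ Ioo (0 : ℝ) 1,
      jDist (ball (0 : EuclideanSpace ℝ (Fin n)) 1)
          (TMap a (-(t • (‖a‖⁻¹ • a)))) (TMap a (t • (‖a‖⁻¹ • a))) /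
        jDist (ball (0 : EuclideanSpace ℝ (Fin n)) 1) (-(t • (‖a‖⁻¹ • a))) (t • (‖a‖⁻¹ • a)) =
        1 + arctanh (‖a‖ * t) / arctanh t) ∧
    StrictAntiOn (fun t : ℝ => 1 + arctanh (‖a‖ * t) / arctanh t) (Ioo 0 1) ∧
    (fun t : ℝ => 1 + arctanh (‖a‖ * t) / arctanh t) '' Ioo 0 1 =
      Ioo 1 (1 + ‖a‖) ∧
    sSup {r : ℝ | ∃ t ∈ Ioo (0 : ℝ) 1,
        r = jDist (ball (0 : EuclideanSpace ℝ (Fin n)) 1)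
              (TMap a (-(t • (‖a‖⁻¹ • a)))) (TMap a (t • (‖a‖⁻¹ • a))) /
            jDist (ball (0 : EuclideanSpace ℝ (Fin n)) 1)
              (-(t • (‖a‖⁻¹ • a))) (t • (‖a‖⁻¹ • a))} = 1 + ‖a‖ := by
  have hratio := fun t (ht : t ∈ Ioo (0 : ℝ) 1) =>
    jDist_ball_TMap_div_jDist_ball (norm_pos_iff.mp ha0) ha1 ht
  have himage := image_one_add_arctanh_mul_div_arctanh ⟨ha0, ha1⟩
  refine ⟨hratio, (strictAntiOn_arctanh_mul_div_arctanh ⟨ha0, ha1⟩).const_add 1, himage, ?_⟩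
  rw [← csSup_Ioo (show 1 < 1 + ‖a‖ by linarith), ← himage]
  congr 1 with r
  exact exists_congr fun t => and_congr_right fun ht => by rw [hratio t ht, eq_comm]

/-- The ratio of `j`-distances of the images under `T_a` of antipodal points
`± t e_a` equals `1 + arctanh(|a| t)/arctanh t`; this is strictly decreasing on `(0,1)` with
range `(1, 1+|a|)`, so the supremum of the ratio is `1 + |a|`. -/
theorem jDist_TMap_antipodal_ratio {n : ℕ} (hn : 2 ≤ n)
    (a : EuclideanSpace ℝ (Fin n)) (ha0 : 0 < ‖a‖) (ha1 : ‖a‖ < 1) :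
    (∀ t ∈ Ioo (0 : ℝ) 1,
      jDist (ball (0 : EuclideanSpace ℝ (Fin n)) 1)
          (TMap a (-(t • (‖a‖⁻¹ • a)))) (TMap a (t • (‖a‖⁻¹ • a))) /
        jDist (ball (0 : EuclideanSpace ℝ (Fin n)) 1) (-(t • (‖a‖⁻¹ • a))) (t • (‖a‖⁻¹ • a)) =
        1 + arctanh (‖a‖ * t) / arctanh t) ∧
    StrictAntiOn (fun t : ℝ => 1 + arctanh (‖a‖ * t) / arctanh t) (Ioo 0 1) ∧
    (fun t : ℝ => 1 + arctanh (‖a‖ * t) / arctanh t) '' Ioo 0 1 =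
      Ioo 1 (1 + ‖a‖) ∧
    sSup {r : ℝ | ∃ t ∈ Ioo (0 : ℝ) 1,
        r = jDist (ball (0 : EuclideanSpace ℝ (Fin n)) 1)
              (TMap a (-(t • (‖a‖⁻¹ • a)))) (TMap a (t • (‖a‖⁻¹ • a))) /
            jDist (ball (0 : EuclideanSpace ℝ (Fin n)) 1)
              (-(t • (‖a‖⁻¹ • a))) (t • (‖a‖⁻¹ • a))} = 1 + ‖a‖ :=
  jDist_TMap_antipodal_ratio_general a ha0 ha1
end

section
/- Let r ∈ (0,1). The function f(t) = log(1 + t/(1−r)) / arsinh(t/√((1−r²)(1−(r−t)²))) is strictly decreasing on (0,2r), and maps (0,2r) onto (1, 1+r). -/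
/-!
Writing `u = r - t`, the function becomes the Cauchy quotient `(F r - F u) / (artanh r - artanh u)`
with `F x = -log (1 - x)`, since `arsinh ((r - u) / √((1 - r²)(1 - u²))) = artanh r - artanh u`.
The ratio of derivatives `F' / artanh' = 1 + x` is increasing, so the quotient increases with `u`
and lies strictly between `1 + u` and `1 + r`; at `u = -r` it equals `1`. The intermediate value
theorem then gives every value in `(1, 1 + r)`.
-/

open Real Set

theorem Real.hasDerivAt_artanh {x : ℝ} (hx : x ∈ Ioo (-1) 1) :
    HasDerivAt artanh (1 - x ^ 2)⁻¹ x := by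
  obtain ⟨hx₁, hx₂⟩ := hx
  have hlog : HasDerivAt (fun y => (log (1 + y) - log (1 - y)) / 2)
      ((1 / (1 + x) - (-1) / (1 - x)) / 2) x :=
    ((((hasDerivAt_id x).const_add 1).log (by simp; linarith)).sub
      (((hasDerivAt_id x).const_sub 1).log (by simp; linarith))).div_const 2
  have heq : artanh =ᶠ[nhds x] fun y => (log (1 + y) - log (1 - y)) / 2 := by
    filter_upwards [Ioo_mem_nhds hx₁ hx₂] with y hy
    rw [artanh_eq_half_log (Ioo_subset_Icc_self hy),
      log_div (by linarith [hy.1]) (by linarith [hy.2])]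
    ring
  have hderiv : (1 / (1 + x) - (-1) / (1 - x)) / 2 = (1 - x ^ 2)⁻¹ := by
    have : 1 + x ≠ 0 := by linarith
    have : 1 - x ≠ 0 := by linarith
    have : 1 - x ^ 2 ≠ 0 := by nlinarith
    field_simp
    ring
  exact hderiv ▸ hlog.congr_of_eventuallyEq heq

theorem Real.arsinh_div_sqrt_eq_artanh_sub {x y : ℝ} (hx : x ∈ Ioo (-1) 1)
    (hy : y ∈ Ioo (-1) 1) :
    arsinh ((x - y) / √((1 - x ^ 2) * (1 - y ^ 2))) = artanh x - artanh y := by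
  have hx' : 0 < 1 - x ^ 2 := by nlinarith [hx.1, hx.2]
  have hy' : 0 < 1 - y ^ 2 := by nlinarith [hy.1, hy.2]
  rw [← arsinh_sinh (artanh x - artanh y), sinh_sub, sinh_artanh hx, cosh_artanh hx,
    sinh_artanh hy, cosh_artanh hy, sqrt_mul hx'.le]
  congr 1
  field_simp

noncomputable def cauchyQuotient (f g : ℝ → ℝ) (r u : ℝ) : ℝ := (f r - f u) / (g r - g u)

section CauchyQuotient

variable {f g g' h : ℝ → ℝ} {a b : ℝ}

theorem exists_sub_eq_sub_mul_of_hasDerivAt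
    (hf : ∀ x ∈ Ioo a b, HasDerivAt f (h x * g' x) x)
    (hg : ∀ x ∈ Ioo a b, HasDerivAt g (g' x) x) (hg' : ∀ x ∈ Ioo a b, 0 < g' x)
    {u v : ℝ} (hau : a < u) (huv : u < v) (hvb : v < b) :
    ∃ c ∈ Ioo u v, f v - f u = (g v - g u) * h c := by
  have hsub : Icc u v ⊆ Ioo a b := Icc_subset_Ioo hau hvb
  obtain ⟨c, hc, heq⟩ := exists_ratio_hasDerivAt_eq_ratio_slope f (fun x => h x * g' x) huv
    (fun x hx => (hf x (hsub hx)).continuousAt.continuousWithinAt)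
    (fun x hx => hf x (hsub (Ioo_subset_Icc_self hx)))
    g g' (fun x hx => (hg x (hsub hx)).continuousAt.continuousWithinAt)
    (fun x hx => hg x (hsub (Ioo_subset_Icc_self hx)))
  refine ⟨c, hc, mul_right_cancel₀ (hg' c (hsub (Ioo_subset_Icc_self hc))).ne' ?_⟩
  linear_combination -heq

theorem sub_pos_of_hasDerivAt_pos (hg : ∀ x ∈ Ioo a b, HasDerivAt g (g' x) x)
    (hg' : ∀ x ∈ Ioo a b, 0 < g' x) {u v : ℝ} (hau : a < u) (huv : u < v) (hvb : v < b) :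
    0 < g v - g u :=
  sub_pos.2 <| strictMonoOn_of_hasDerivWithinAt_pos (convex_Ioo a b)
    (fun x hx => (hg x hx).continuousAt.continuousWithinAt)
    (fun x hx => (hg x (interior_subset hx)).hasDerivWithinAt)
    (fun x hx => hg' x (interior_subset hx)) ⟨hau, huv.trans hvb⟩ ⟨hau.trans huv, hvb⟩ huv

theorem cauchyQuotient_mem_Ioo (hf : ∀ x ∈ Ioo a b, HasDerivAt f (h x * g' x) x)
    (hg : ∀ x ∈ Ioo a b, HasDerivAt g (g' x) x) (hg' : ∀ x ∈ Ioo a b, 0 < g' x)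
    (hh : StrictMonoOn h (Ioo a b)) {r u : ℝ} (hau : a < u) (hur : u < r) (hrb : r < b) :
    cauchyQuotient f g r u ∈ Ioo (h u) (h r) := by
  obtain ⟨c, hc, heq⟩ := exists_sub_eq_sub_mul_of_hasDerivAt hf hg hg' hau hur hrb
  have hpos := sub_pos_of_hasDerivAt_pos hg hg' hau hur hrb
  rw [cauchyQuotient, heq, mul_div_cancel_left₀ _ hpos.ne']
  exact ⟨hh ⟨hau, hur.trans hrb⟩ ⟨hau.trans hc.1, hc.2.trans hrb⟩ hc.1,
    hh ⟨hau.trans hc.1, hc.2.trans hrb⟩ ⟨hau.trans hur, hrb⟩ hc.2⟩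

/-- The monotone form of l'Hôpital's rule. -/
theorem strictMonoOn_cauchyQuotient (hf : ∀ x ∈ Ioo a b, HasDerivAt f (h x * g' x) x)
    (hg : ∀ x ∈ Ioo a b, HasDerivAt g (g' x) x) (hg' : ∀ x ∈ Ioo a b, 0 < g' x)
    (hh : StrictMonoOn h (Ioo a b)) {r : ℝ} (hrb : r < b) :
    StrictMonoOn (cauchyQuotient f g r) (Ioo a r) := by
  intro u hu v hv huv
  obtain ⟨c, hc, hsplit⟩ := exists_sub_eq_sub_mul_of_hasDerivAt hf hg hg' hu.1 huv (hv.2.trans hrb)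
  have hAu := sub_pos_of_hasDerivAt_pos hg hg' hu.1 huv (hv.2.trans hrb)
  have hAv := sub_pos_of_hasDerivAt_pos hg hg' hv.1 hv.2 hrb
  have hQv := (cauchyQuotient_mem_Ioo hf hg hg' hh hv.1 hv.2 hrb).1
  have hhc : h c < h v := hh ⟨hu.1.trans hc.1, hc.2.trans (hv.2.trans hrb)⟩
    ⟨hv.1, hv.2.trans hrb⟩ hc.2
  -- `cauchyQuotient f g r u` is a weighted mean of `h c < h v` and `cauchyQuotient f g r v`
  have hnum : f r - f u = (g v - g u) * h c + (g r - g v) * cauchyQuotient f g r v := by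
    rw [cauchyQuotient, mul_div_cancel₀ _ hAv.ne']
    linarith
  rw [cauchyQuotient, hnum, show g r - g u = (g v - g u) + (g r - g v) by ring,
    div_lt_iff₀ (by linarith)]
  nlinarith

theorem continuousOn_cauchyQuotient (hf : ∀ x ∈ Ioo a b, ContinuousAt f x)
    (hg : ∀ x ∈ Ioo a b, HasDerivAt g (g' x) x) (hg' : ∀ x ∈ Ioo a b, 0 < g' x) {r : ℝ}
    (hrb : r < b) : ContinuousOn (cauchyQuotient f g r) (Ioo a r) := by
  intro u hu
  have hub : u ∈ Ioo a b := ⟨hu.1, hu.2.trans hrb⟩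
  exact (continuousAt_const.sub (hf u hub)).div
    (continuousAt_const.sub (hg u hub).continuousAt)
    (sub_pos_of_hasDerivAt_pos hg hg' hu.1 hu.2 hrb).ne' |>.continuousWithinAt

end CauchyQuotient

theorem hasDerivAt_neg_log_one_sub {x : ℝ} (hx : x ∈ Ioo (-1) 1) :
    HasDerivAt (fun y => -log (1 - y)) ((1 + x) * (1 - x ^ 2)⁻¹) x := by
  have h₁ : 1 - x ≠ 0 := by linarith [hx.2]
  have h₂ : 1 - x ^ 2 ≠ 0 := by nlinarith [hx.1, hx.2]
  have hderiv : -(-1 / (1 - x)) = (1 + x) * (1 - x ^ 2)⁻¹ := by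
    field_simp
    ring
  exact hderiv ▸ (((hasDerivAt_id x).const_sub 1).log h₁).neg

theorem inv_one_sub_sq_pos {x : ℝ} (hx : x ∈ Ioo (-1) 1) : 0 < (1 - x ^ 2)⁻¹ :=
  inv_pos.2 (by nlinarith [hx.1, hx.2])

section LogArtanh

variable {r : ℝ}

theorem strictMonoOn_cauchyQuotient_neg_log_one_sub_artanh (hr : r < 1) :
    StrictMonoOn (cauchyQuotient (fun x => -log (1 - x)) artanh r) (Ioo (-1) r) :=
  strictMonoOn_cauchyQuotient (fun _ => hasDerivAt_neg_log_one_sub)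
    (fun _ => hasDerivAt_artanh) (fun _ => inv_one_sub_sq_pos)
    ((strictMono_id.const_add 1).strictMonoOn _) hr

theorem cauchyQuotient_neg_log_one_sub_artanh_mem_Ioo {u : ℝ} (hu : -1 < u) (hur : u < r)
    (hr : r < 1) :
    cauchyQuotient (fun x => -log (1 - x)) artanh r u ∈ Ioo (1 + u) (1 + r) :=
  cauchyQuotient_mem_Ioo (fun _ => hasDerivAt_neg_log_one_sub)
    (fun _ => hasDerivAt_artanh) (fun _ => inv_one_sub_sq_pos)
    ((strictMono_id.const_add 1).strictMonoOn _) hu hur hr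

theorem cauchyQuotient_neg_log_one_sub_artanh_neg (hr : r ∈ Ioo 0 1) :
    cauchyQuotient (fun x => -log (1 - x)) artanh r (-r) = 1 := by
  obtain ⟨hr₀, hr₁⟩ := hr
  have hlog : 0 < log (1 + r) - log (1 - r) :=
    sub_pos.2 (log_lt_log (by linarith) (by linarith))
  rw [cauchyQuotient, artanh_eq_half_log ⟨by linarith, hr₁.le⟩,
    artanh_eq_half_log ⟨by linarith, by linarith⟩]
  simp only [sub_neg_eq_add, ← sub_eq_add_neg]
  rw [log_div (by linarith) (by linarith), log_div (by linarith) (by linarith),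
    div_eq_one_iff_eq (by linarith)]
  ring

theorem image_cauchyQuotient_neg_log_one_sub_artanh (hr : r ∈ Ioo 0 1) :
    cauchyQuotient (fun x => -log (1 - x)) artanh r '' Ioo (-r) r = Ioo 1 (1 + r) := by
  obtain ⟨hr₀, hr₁⟩ := hr
  have hQ₁ := cauchyQuotient_neg_log_one_sub_artanh_neg ⟨hr₀, hr₁⟩
  ext y
  constructor
  · rintro ⟨u, hu, rfl⟩
    refine ⟨hQ₁.symm.trans_lt <| strictMonoOn_cauchyQuotient_neg_log_one_sub_artanh hr₁
      ⟨by linarith, by linarith⟩ ⟨by linarith [hu.1], hu.2⟩ hu.1, ?_⟩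
    exact (cauchyQuotient_neg_log_one_sub_artanh_mem_Ioo (by linarith [hu.1]) hu.2 hr₁).2
  · rintro ⟨hy₁, hy₂⟩
    -- at `u = y - 1` the quotient exceeds `1 + u = y`, so the intermediate value theorem applies
    have hy : y < cauchyQuotient (fun x => -log (1 - x)) artanh r (y - 1) := by
      simpa using (cauchyQuotient_neg_log_one_sub_artanh_mem_Ioo (u := y - 1) (by linarith)
        (by linarith) hr₁).1
    have hcont := (continuousOn_cauchyQuotient
      (fun x hx => (hasDerivAt_neg_log_one_sub hx).continuousAt) (fun _ => hasDerivAt_artanh)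
      (fun _ => inv_one_sub_sq_pos) hr₁).mono
      (Icc_subset_Ioo (by linarith) (by linarith) : Icc (-r) (y - 1) ⊆ Ioo (-1) r)
    obtain ⟨u, hu, rfl⟩ := intermediate_value_Ioc (by linarith) hcont ⟨by rwa [hQ₁], hy.le⟩
    exact ⟨u, ⟨hu.1, by linarith [hu.2]⟩, rfl⟩

theorem log_div_arsinh_eq_cauchyQuotient {u : ℝ} (hr : r ∈ Ioo (-1) 1) (hu : u ∈ Ioo (-1) 1) :
    log (1 + (r - u) / (1 - r)) / arsinh ((r - u) / √((1 - r ^ 2) * (1 - u ^ 2))) =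
      cauchyQuotient (fun x => -log (1 - x)) artanh r u := by
  have hlog : log (1 + (r - u) / (1 - r)) = -log (1 - r) - -log (1 - u) := by
    rw [show 1 + (r - u) / (1 - r) = (1 - u) / (1 - r) by field_simp [(sub_pos.2 hr.2).ne']; ring,
      log_div (by linarith [hu.2]) (by linarith [hr.2])]
    ring
  rw [hlog, arsinh_div_sqrt_eq_artanh_sub hr hu, cauchyQuotient]

end LogArtanh

/-- For `r ∈ (0,1)`, the function
`t ↦ log(1 + t/(1-r)) / arsinh(t / √((1-r²)(1-(r-t)²)))` is strictly decreasing on `(0, 2r)`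
and maps `(0, 2r)` onto `(1, 1+r)`. -/
theorem log_div_arsinh_strictAnti (r : ℝ) (hr : r ∈ Ioo (0 : ℝ) 1) :
    StrictAntiOn (fun t : ℝ =>
        Real.log (1 + t / (1 - r)) /
          Real.arsinh (t / Real.sqrt ((1 - r ^ 2) * (1 - (r - t) ^ 2)))) (Ioo 0 (2 * r)) ∧
    (fun t : ℝ =>
        Real.log (1 + t / (1 - r)) /
          Real.arsinh (t / Real.sqrt ((1 - r ^ 2) * (1 - (r - t) ^ 2)))) '' Ioo 0 (2 * r) =
      Ioo 1 (1 + r) := by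
  obtain ⟨hr₀, hr₁⟩ := hr
  set Q := cauchyQuotient (fun x => -log (1 - x)) artanh r
  have hQ : ∀ t ∈ Ioo 0 (2 * r), log (1 + t / (1 - r)) /
      arsinh (t / √((1 - r ^ 2) * (1 - (r - t) ^ 2))) = Q (r - t) := fun t ht => by
    simpa only [sub_sub_cancel] using log_div_arsinh_eq_cauchyQuotient (u := r - t)
      ⟨by linarith, hr₁⟩ ⟨by linarith [ht.2], by linarith [ht.1]⟩
  refine ⟨fun t₁ h₁ t₂ h₂ hlt => ?_, ?_⟩
  · dsimp only
    rw [hQ t₁ h₁, hQ t₂ h₂]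
    exact strictMonoOn_cauchyQuotient_neg_log_one_sub_artanh hr₁
      ⟨by linarith [h₂.2], by linarith [h₂.1]⟩ ⟨by linarith [h₁.2], by linarith [h₁.1]⟩
      (by linarith)
  · rw [image_congr hQ, ← image_image Q (fun t => r - t), image_const_sub_Ioo, sub_zero,
      show r - 2 * r = -r by ring]
    exact image_cauchyQuotient_neg_log_one_sub_artanh ⟨hr₀, hr₁⟩
end

section
/- Let a ≥ 0. Then the maximum of (r+s+a)²/((1+r²)(1+s²)) over all r,s ∈ [0,∞) equals ((a+√(4+a²))/2)², and it is attained at r = s = (−a+√(4+a²))/2. -/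
/-!
Let `u = (a + √(4 + a²))/2` and `v = (-a + √(4 + a²))/2`, so that `uv = 1` and `u² = au + 1`.
Cauchy–Schwarz gives `(r + (s + a))² ≤ (1 + r²)(1 + (s + a)²)`, and
`u (u²(1 + s²) - 1 - (s + a)²) = a (us - 1)² ≥ 0` bounds the second factor by `u²(1 + s²)`.
At `r = s = v` the relation `1 + v² = v (2v + a)` makes the ratio `1/v² = u²`.
-/

theorem sq_add_le_one_add_sq_mul_one_add_sq (x y : ℝ) :
    (x + y) ^ 2 ≤ (1 + x ^ 2) * (1 + y ^ 2) := by
  nlinarith [sq_nonneg (x * y - 1)]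

section Root

variable {a u v : ℝ}

theorem one_add_add_sq_le_of_sq_eq (ha : 0 ≤ a) (hu : 0 < u) (hroot : u ^ 2 = a * u + 1)
    (s : ℝ) : 1 + (s + a) ^ 2 ≤ u ^ 2 * (1 + s ^ 2) := by
  have key : u * (u ^ 2 * (1 + s ^ 2) - (1 + (s + a) ^ 2)) = a * (u * s - 1) ^ 2 := by
    linear_combination (u * (1 + s ^ 2) + a) * hroot
  have : 0 ≤ u * (u ^ 2 * (1 + s ^ 2) - (1 + (s + a) ^ 2)) := key ▸ by positivity
  linarith [nonneg_of_mul_nonneg_right this hu]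

theorem div_le_sq_of_sq_eq (ha : 0 ≤ a) (hu : 0 < u) (hroot : u ^ 2 = a * u + 1) (r s : ℝ) :
    (r + s + a) ^ 2 / ((1 + r ^ 2) * (1 + s ^ 2)) ≤ u ^ 2 := by
  rw [div_le_iff₀ (by positivity)]
  calc (r + s + a) ^ 2 = (r + (s + a)) ^ 2 := by ring
    _ ≤ (1 + r ^ 2) * (1 + (s + a) ^ 2) := sq_add_le_one_add_sq_mul_one_add_sq r (s + a)
    _ ≤ (1 + r ^ 2) * (u ^ 2 * (1 + s ^ 2)) := by
      gcongr
      exact one_add_add_sq_le_of_sq_eq ha hu hroot s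
    _ = u ^ 2 * ((1 + r ^ 2) * (1 + s ^ 2)) := by ring

theorem diag_div_eq_inv_sq (hv : 0 < v) (hroot : v ^ 2 + a * v = 1) :
    (v + v + a) ^ 2 / ((1 + v ^ 2) * (1 + v ^ 2)) = v⁻¹ ^ 2 := by
  have hsum : 0 < 2 * v + a := by nlinarith
  have hden : 1 + v ^ 2 = v * (2 * v + a) := by linear_combination -hroot
  rw [hden, show v + v + a = 2 * v + a by ring]
  field_simp

end Root

section SqrtFourAddSq

variable (a : ℝ)

theorem sq_sqrt_four_add_sq : √(4 + a ^ 2) ^ 2 = 4 + a ^ 2 :=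
  Real.sq_sqrt (by positivity)

theorem neg_add_sqrt_four_add_sq_div_two_pos : 0 < (-a + √(4 + a ^ 2)) / 2 := by
  have := sq_sqrt_four_add_sq a
  nlinarith [Real.sqrt_nonneg (4 + a ^ 2)]

theorem neg_add_sqrt_four_add_sq_div_two_isRoot :
    ((-a + √(4 + a ^ 2)) / 2) ^ 2 + a * ((-a + √(4 + a ^ 2)) / 2) = 1 := by
  linear_combination sq_sqrt_four_add_sq a / 4

theorem add_sqrt_four_add_sq_div_two_isRoot :
    ((a + √(4 + a ^ 2)) / 2) ^ 2 = a * ((a + √(4 + a ^ 2)) / 2) + 1 := by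
  linear_combination sq_sqrt_four_add_sq a / 4

theorem inv_neg_add_sqrt_four_add_sq_div_two :
    ((-a + √(4 + a ^ 2)) / 2)⁻¹ = (a + √(4 + a ^ 2)) / 2 := by
  rw [inv_eq_of_mul_eq_one_right]
  linear_combination sq_sqrt_four_add_sq a / 4

end SqrtFourAddSq

/-- For `a ≥ 0`, the maximum of `(r+s+a)²/((1+r²)(1+s²))` over `r, s ≥ 0`
equals `((a+√(4+a²))/2)²`, attained at `r = s = (-a+√(4+a²))/2`. -/
theorem max_ratio_formula (a : ℝ) (ha : 0 ≤ a) :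
    (∀ r s : ℝ, 0 ≤ r → 0 ≤ s →
      (r + s + a) ^ 2 / ((1 + r ^ 2) * (1 + s ^ 2)) ≤ ((a + Real.sqrt (4 + a ^ 2)) / 2) ^ 2) ∧
    ((-a + Real.sqrt (4 + a ^ 2)) / 2 + (-a + Real.sqrt (4 + a ^ 2)) / 2 + a) ^ 2 /
        ((1 + ((-a + Real.sqrt (4 + a ^ 2)) / 2) ^ 2) *
          (1 + ((-a + Real.sqrt (4 + a ^ 2)) / 2) ^ 2)) =
      ((a + Real.sqrt (4 + a ^ 2)) / 2) ^ 2 := by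
  have hv := neg_add_sqrt_four_add_sq_div_two_pos a
  have hinv := inv_neg_add_sqrt_four_add_sq_div_two a
  have hu : 0 < (a + √(4 + a ^ 2)) / 2 := hinv ▸ inv_pos.2 hv
  refine ⟨fun r s _ _ => div_le_sq_of_sq_eq ha hu (add_sqrt_four_add_sq_div_two_isRoot a) r s, ?_⟩
  rw [diag_div_eq_inv_sq hv (neg_add_sqrt_four_add_sq_div_two_isRoot a), hinv]
end

section
/- Let n ≥ 2, z ∈ ℝⁿ, and x, y ∈ ℝⁿ∖{z}. Then k_{ℝⁿ∖{z}}(x,y) = √(θ² + (log(|x−z|/|y−z|))²), where θ = ∠(x,z,y) ∈ [0,π] is the angle at z between the vectors x−z and y−z. -/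
open Metric Set Real Filter

/-!
Write an admissible curve as `γ - z = r • u` with `r = ‖γ - z‖` and `‖u‖ = 1`. Then
`‖γ'‖ / r = √(‖u'‖² + ((log r)')²)`, the integral of `(log r)'` is `log (r₁ / r₀)`, and the length
of `u` on the unit sphere is at least the angle `θ` between its endpoints. Minkowski's inequality
`√((∫ f)² + (∫ g)²) ≤ ∫ √(f² + g²)` then bounds every weighted length from below by
`√(θ² + log² (r₀ / r₁))`. The logarithmic spiral `z + r₀ exp (t (log (r₁ / r₀) + θ i))`, drawn in
a plane through `z`, `x`, `y`, has `‖γ'‖ / ‖γ - z‖` constant, equal to this bound.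
-/

open Topology InnerProductGeometry MeasureTheory

section

variable {E : Type*} [NormedAddCommGroup E] [InnerProductSpace ℝ E]

theorem norm_sub_eq_two_mul_sin_half_angle {a b : E} (ha : ‖a‖ = 1) (hb : ‖b‖ = 1) :
    ‖a - b‖ = 2 * sin (angle a b / 2) := by
  have hsin : 0 ≤ sin (angle a b / 2) :=
    sin_nonneg_of_nonneg_of_le_pi (by linarith [angle_nonneg a b])
      (by linarith [angle_le_pi a b, pi_pos])
  have hcos : cos (angle a b) = 1 - 2 * sin (angle a b / 2) ^ 2 := by
    have := cos_two_mul' (angle a b / 2)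
    rw [mul_div_cancel₀ _ two_ne_zero] at this
    linarith [cos_sq_add_sin_sq (angle a b / 2)]
  have h := norm_sub_sq_eq_norm_sq_add_norm_sq_sub_two_mul_norm_mul_norm_mul_cos_angle a b
  rw [ha, hb, hcos] at h
  nlinarith [norm_nonneg (a - b)]

theorem angle_mul_cos_half_angle_le_norm_sub {a b : E} (ha : ‖a‖ = 1) (hb : ‖b‖ = 1) :
    angle a b * cos (angle a b / 2) ≤ ‖a - b‖ := by
  rw [norm_sub_eq_two_mul_sin_half_angle ha hb]
  rcases (angle_le_pi a b).lt_or_eq with hlt | heq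
  · have hcos : 0 < cos (angle a b / 2) :=
      cos_pos_of_mem_Ioo ⟨by linarith [angle_nonneg a b, pi_pos], by linarith⟩
    have := le_tan (x := angle a b / 2) (by linarith [angle_nonneg a b]) (by linarith)
    rw [tan_eq_sin_div_cos, le_div_iff₀ hcos] at this
    linarith
  · rw [heq, cos_pi_div_two, mul_zero]
    exact mul_nonneg zero_le_two
      (sin_nonneg_of_nonneg_of_le_pi (by positivity) (by linarith [pi_pos]))

theorem eventually_angle_div_sub_lt {u : ℝ → E} {u' : E} {t r : ℝ}
    (hd : HasDerivWithinAt u u' (Ioi t) t) (ht : ‖u t‖ = 1)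
    (hunit : ∀ᶠ s in 𝓝[>] t, ‖u s‖ = 1) (hr : ‖u'‖ < r) :
    ∀ᶠ s in 𝓝[>] t, angle (u t) (u s) / (s - t) < r := by
  have hchord : Tendsto (fun s => ‖u s - u t‖ / (s - t)) (𝓝[>] t) (𝓝 ‖u'‖) := by
    refine ((hasDerivWithinAt_iff_tendsto_slope' (lt_irrefl t)).1 hd).norm.congr' ?_
    filter_upwards [self_mem_nhdsWithin] with s hs
    rw [slope_def_module, norm_smul, norm_inv, Real.norm_eq_abs, abs_of_pos (sub_pos.2 hs),
      inv_mul_eq_div]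
  have hangle : Tendsto (fun s => angle (u t) (u s)) (𝓝[>] t) (𝓝 0) := by
    have hne : u t ≠ 0 := norm_ne_zero_iff.1 (by rw [ht]; exact one_ne_zero)
    have := (continuousAt_angle hne hne).tendsto.comp
      (tendsto_const_nhds.prodMk_nhds hd.continuousWithinAt)
    rwa [angle_self hne] at this
  have hcos : Tendsto (fun s => cos (angle (u t) (u s) / 2)) (𝓝[>] t) (𝓝 1) := by
    have hhalf : Tendsto (fun s => angle (u t) (u s) / 2) (𝓝[>] t) (𝓝 0) := by
      simpa using hangle.div_const 2
    have h := (continuous_cos.tendsto 0).comp hhalf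
    rw [cos_zero] at h
    exact h
  have hlim : Tendsto (fun s => ‖u s - u t‖ / (s - t) / cos (angle (u t) (u s) / 2)) (𝓝[>] t)
      (𝓝 ‖u'‖) := by
    have h := hchord.div hcos one_ne_zero
    rw [div_one] at h
    exact h
  filter_upwards [hlim.eventually (gt_mem_nhds hr), hcos.eventually (lt_mem_nhds one_pos),
    self_mem_nhdsWithin, hunit] with s hlt hpos hs hs1
  refine lt_of_le_of_lt ?_ hlt
  rw [le_div_iff₀ hpos, div_mul_eq_mul_div, norm_sub_rev]
  exact div_le_div_of_nonneg_right (angle_mul_cos_half_angle_le_norm_sub ht hs1)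
    (sub_pos.2 hs).le

theorem ContinuousOn.hasDerivWithinAt_integral_Ici {F : Type*} [NormedAddCommGroup F]
    [NormedSpace ℝ F] [CompleteSpace F] {f : ℝ → F} {a b t : ℝ} (hf : ContinuousOn f (Icc a b))
    (ht : t ∈ Ico a b) :
    HasDerivWithinAt (fun s => ∫ x in a..s, f x) (f t) (Ici t) t := by
  have hnhds : Icc a b ∈ 𝓝[>] t := Icc_mem_nhdsGT_of_mem ht
  exact intervalIntegral.integral_hasDerivWithinAt_right
    ((hf.mono (Icc_subset_Icc le_rfl ht.2.le)).intervalIntegrable_of_Icc ht.1)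
    ((hf.stronglyMeasurableAtFilter_nhdsWithin measurableSet_Icc t).filter_mono
      (nhdsWithin_le_of_mem hnhds))
    ((hf t (Ico_subset_Icc_self ht)).mono_of_mem_nhdsWithin hnhds)

theorem angle_le_integral_norm_deriv {u u' : ℝ → E} {a b : ℝ} (hab : a ≤ b)
    (hunit : ∀ t ∈ Icc a b, ‖u t‖ = 1)
    (hu : ∀ t ∈ Icc a b, HasDerivWithinAt u (u' t) (Icc a b) t)
    (hu' : ContinuousOn u' (Icc a b)) :
    angle (u a) (u b) ≤ ∫ t in a..b, ‖u' t‖ := by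
  -- `t ↦ angle (u a) (u t)` need not be differentiable, so we only bound its right slopes, via the
  -- triangle inequality for angles, and compare it with the primitive of `‖u'‖`.
  have hne : ∀ t ∈ Icc a b, u t ≠ 0 := fun t ht =>
    norm_ne_zero_iff.1 (by rw [hunit t ht]; exact one_ne_zero)
  have ha : a ∈ Icc a b := left_mem_Icc.2 hab
  have hint : IntervalIntegrable (fun t => ‖u' t‖) volume a b :=
    hu'.norm.intervalIntegrable_of_Icc hab
  have hcont : ContinuousOn (fun t => angle (u a) (u t)) (Icc a b) := fun t ht =>
    ContinuousAt.comp_continuousWithinAt (f := fun s => (u a, u s))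
      (continuousAt_angle (hne a ha) (hne t ht))
      (continuousWithinAt_const.prodMk (hu t ht).continuousWithinAt)
  have hstart : angle (u a) (u a) ≤ ∫ s in a..a, ‖u' s‖ := by
    rw [angle_self (hne a ha), intervalIntegral.integral_same]
  have hprim : ContinuousOn (fun t => ∫ s in a..t, ‖u' s‖) (Icc a b) := by
    simpa [uIcc_of_le hab] using
      intervalIntegral.continuousOn_primitive_interval' hint left_mem_uIcc
  have hslope : ∀ t ∈ Ico a b, ∀ r, ‖u' t‖ < r →
      ∃ᶠ s in 𝓝[>] t, slope (fun t => angle (u a) (u t)) t s < r := by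
    intro t ht r hr
    have hnhds : Icc a b ∈ 𝓝[>] t := Icc_mem_nhdsGT_of_mem ht
    have ht' := Ico_subset_Icc_self ht
    refine Eventually.frequently ?_
    filter_upwards [eventually_angle_div_sub_lt ((hu t ht').mono_of_mem_nhdsWithin hnhds)
      (hunit t ht') (eventually_of_mem hnhds hunit) hr, self_mem_nhdsWithin] with s hlt hs
    refine lt_of_le_of_lt ?_ hlt
    rw [slope_def_field]
    exact div_le_div_of_nonneg_right (by linarith [angle_le_angle_add_angle (u a) (u t) (u s)])
      (sub_pos.2 hs).le
  exact image_le_of_liminf_slope_right_le_deriv_boundary hcont hstart hprim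
    (fun t ht => hu'.norm.hasDerivWithinAt_integral_Ici ht) hslope
    (right_mem_Icc.2 hab)

theorem sqrt_sq_add_sq_integral_le_integral {f g : ℝ → ℝ} {a b : ℝ} (hab : a ≤ b)
    (hf : IntervalIntegrable f volume a b) (hg : IntervalIntegrable g volume a b) :
    √((∫ t in a..b, f t) ^ 2 + (∫ t in a..b, g t) ^ 2) ≤ ∫ t in a..b, √(f t ^ 2 + g t ^ 2) := by
  -- This is `‖∫ F‖ ≤ ∫ ‖F‖` for `F = f + g i : ℂ`.
  have hf' : IntervalIntegrable (fun t => (f t : ℂ)) volume a b := ⟨hf.1.ofReal, hf.2.ofReal⟩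
  have hg' : IntervalIntegrable (fun t => (g t : ℂ)) volume a b := ⟨hg.1.ofReal, hg.2.ofReal⟩
  have hI : ∫ t in a..b, ((f t : ℂ) + g t * Complex.I) =
      (∫ t in a..b, f t : ℝ) + (∫ t in a..b, g t : ℝ) * Complex.I := by
    rw [intervalIntegral.integral_add hf' (hg'.mul_const _), intervalIntegral.integral_mul_const,
      intervalIntegral.integral_ofReal, intervalIntegral.integral_ofReal]
  simpa only [hI, Complex.norm_add_mul_I] using
    intervalIntegral.norm_integral_le_integral_norm (μ := volume)
      (f := fun t => (f t : ℂ) + g t * Complex.I) hab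

noncomputable def radialRate (v v' : E) : ℝ := inner ℝ v v' / ‖v‖ ^ 2

noncomputable def angularVelocity (v v' : E) : E := ‖v‖⁻¹ • (v' - radialRate v v' • v)

theorem inv_norm_mul_norm_eq_sqrt {v : E} (hv : v ≠ 0) (v' : E) :
    ‖v‖⁻¹ * ‖v'‖ = √(‖angularVelocity v v'‖ ^ 2 + radialRate v v' ^ 2) := by
  have hn : ‖v‖ ≠ 0 := norm_ne_zero_iff.2 hv
  have hperp : ‖v' - radialRate v v' • v‖ ^ 2 = ‖v'‖ ^ 2 - radialRate v v' ^ 2 * ‖v‖ ^ 2 := by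
    rw [norm_sub_sq_real, real_inner_smul_right, norm_smul, Real.norm_eq_abs, mul_pow, sq_abs,
      real_inner_comm, radialRate]
    field_simp
    ring
  rw [← Real.sqrt_sq (by positivity : 0 ≤ ‖v‖⁻¹ * ‖v'‖), angularVelocity, norm_smul, norm_inv,
    norm_norm, mul_pow, mul_pow, hperp]
  congr 1
  field_simp
  ring

section Polar

variable {v : ℝ → E} {v' : E} {s : Set ℝ} {t : ℝ}

theorem HasDerivWithinAt.log_norm (hv : HasDerivWithinAt v v' s t) (h0 : v t ≠ 0) :
    HasDerivWithinAt (fun t => Real.log ‖v t‖) (radialRate (v t) v') s t := by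
  have hfun : (fun t => Real.log ‖v t‖) = fun t => Real.log (‖v t‖ ^ 2) / 2 := by
    funext t; rw [Real.log_pow]; push_cast; ring
  rw [hfun]
  refine ((hv.norm_sq.log (pow_ne_zero 2 (norm_ne_zero_iff.2 h0))).div_const 2).congr_deriv ?_
  rw [radialRate]; ring

theorem HasDerivWithinAt.inv_norm_smul (hv : HasDerivWithinAt v v' s t) (h0 : v t ≠ 0) :
    HasDerivWithinAt (fun t => ‖v t‖⁻¹ • v t) (angularVelocity (v t) v') s t := by
  have hn : ‖v t‖ ≠ 0 := norm_ne_zero_iff.2 h0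
  have hnorm : HasDerivWithinAt (fun t => ‖v t‖) (radialRate (v t) v' * ‖v t‖) s t := by
    have h := hv.norm_sq.sqrt (pow_ne_zero 2 hn)
    simp only [Real.sqrt_sq (norm_nonneg _)] at h
    refine h.congr_deriv ?_
    rw [radialRate]; field_simp
  refine ((hnorm.inv hn).smul hv).congr_deriv ?_
  rw [angularVelocity, smul_sub, smul_smul, sub_eq_add_neg, ← neg_smul]
  congr 2
  field_simp

end Polar

theorem sqrt_angle_sq_add_log_sq_le_integral {v v' : ℝ → E} {a b : ℝ} (hab : a ≤ b)
    (h0 : ∀ t ∈ Icc a b, v t ≠ 0)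
    (hv : ∀ t ∈ Icc a b, HasDerivWithinAt v (v' t) (Icc a b) t)
    (hv' : ContinuousOn v' (Icc a b)) :
    √(angle (v a) (v b) ^ 2 + Real.log (‖v a‖ / ‖v b‖) ^ 2) ≤
      ∫ t in a..b, ‖v t‖⁻¹ * ‖v' t‖ := by
  have ha : a ∈ Icc a b := left_mem_Icc.2 hab
  have hb : b ∈ Icc a b := right_mem_Icc.2 hab
  have hcont : ContinuousOn v (Icc a b) := fun t ht => (hv t ht).continuousWithinAt
  have hnorm : ∀ t ∈ Icc a b, ‖v t‖ ≠ 0 := fun t ht => norm_ne_zero_iff.2 (h0 t ht)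
  have hρ : ContinuousOn (fun t => radialRate (v t) (v' t)) (Icc a b) :=
    (hcont.inner hv').div (hcont.norm.pow 2) fun t ht => pow_ne_zero 2 (hnorm t ht)
  have hω : ContinuousOn (fun t => angularVelocity (v t) (v' t)) (Icc a b) :=
    (hcont.norm.inv₀ hnorm).smul (hv'.sub (hρ.smul hcont))
  have hlog : ∫ t in a..b, radialRate (v t) (v' t) = Real.log ‖v b‖ - Real.log ‖v a‖ :=
    intervalIntegral.integral_eq_sub_of_hasDeriv_right_of_le hab
      (hcont.norm.log hnorm)
      (fun t ht => ((hv t (Ioo_subset_Icc_self ht)).log_norm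
        (h0 t (Ioo_subset_Icc_self ht))).mono_of_mem_nhdsWithin
          (mem_nhdsWithin_of_mem_nhds (Icc_mem_nhds ht.1 ht.2)))
      (hρ.intervalIntegrable_of_Icc hab)
  have hangle : angle (v a) (v b) ≤ ∫ t in a..b, ‖angularVelocity (v t) (v' t)‖ := by
    have h := angle_le_integral_norm_deriv hab (u := fun t => ‖v t‖⁻¹ • v t)
      (fun t ht => norm_smul_inv_norm (h0 t ht)) (fun t ht => (hv t ht).inv_norm_smul (h0 t ht))
      hω
    rwa [angle_smul_left_of_pos _ _ (inv_pos.2 (norm_pos_iff.2 (h0 a ha))),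
      angle_smul_right_of_pos _ _ (inv_pos.2 (norm_pos_iff.2 (h0 b hb)))] at h
  calc √(angle (v a) (v b) ^ 2 + Real.log (‖v a‖ / ‖v b‖) ^ 2)
      ≤ √((∫ t in a..b, ‖angularVelocity (v t) (v' t)‖) ^ 2 +
          (∫ t in a..b, radialRate (v t) (v' t)) ^ 2) := by
        rw [hlog, Real.log_div (hnorm a ha) (hnorm b hb)]
        refine Real.sqrt_le_sqrt (add_le_add (pow_le_pow_left₀ (angle_nonneg _ _) hangle 2)
          (le_of_eq (by ring)))
    _ ≤ ∫ t in a..b, √(‖angularVelocity (v t) (v' t)‖ ^ 2 + radialRate (v t) (v' t) ^ 2) :=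
        sqrt_sq_add_sq_integral_le_integral hab (hω.norm.intervalIntegrable_of_Icc hab)
          (hρ.intervalIntegrable_of_Icc hab)
    _ = ∫ t in a..b, ‖v t‖⁻¹ * ‖v' t‖ := by
        refine intervalIntegral.integral_congr fun t ht => ?_
        rw [uIcc_of_le hab] at ht
        exact (inv_norm_mul_norm_eq_sqrt (h0 t ht) (v' t)).symm

theorem exists_norm_eq_one_inner_eq_zero (hE : 2 ≤ Module.finrank ℝ E) (u : E) :
    ∃ w : E, ‖w‖ = 1 ∧ inner ℝ u w = 0 := by
  have hne : (ℝ ∙ u)ᗮ ≠ ⊥ := by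
    rw [Ne, Submodule.orthogonal_eq_bot_iff]
    intro htop
    have h1 : Module.finrank ℝ (ℝ ∙ u) ≤ 1 := by
      simpa using finrank_span_le_card ({u} : Set E)
    rw [htop, finrank_top] at h1
    omega
  obtain ⟨w, hw, hw0⟩ := Submodule.exists_mem_ne_zero_of_ne_bot hne
  refine ⟨‖w‖⁻¹ • w, norm_smul_inv_norm hw0, ?_⟩
  rw [real_inner_smul_right, Submodule.mem_orthogonal_singleton_iff_inner_right.1 hw, mul_zero]

theorem exists_orthonormal_eq_cos_smul_add_sin_smul (hE : 2 ≤ Module.finrank ℝ E) {u v : E}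
    (hu : ‖u‖ = 1) (hv : ‖v‖ = 1) :
    ∃ w : E, ‖w‖ = 1 ∧ inner ℝ u w = 0 ∧ v = cos (angle u v) • u + sin (angle u v) • w := by
  have hcos : inner ℝ u v = cos (angle u v) := by rw [cos_angle, hu, hv, mul_one, div_one]
  have hperp : ‖v - cos (angle u v) • u‖ = sin (angle u v) := by
    refine (sq_eq_sq₀ (norm_nonneg _) (sin_angle_nonneg u v)).1 ?_
    rw [norm_sub_sq_real, real_inner_smul_right, real_inner_comm, hcos, norm_smul,
      Real.norm_eq_abs, hu, hv, mul_one, sq_abs]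
    linear_combination -cos_sq_add_sin_sq (angle u v)
  by_cases hsin : sin (angle u v) = 0
  · obtain ⟨w, hw, huw⟩ := exists_norm_eq_one_inner_eq_zero hE u
    refine ⟨w, hw, huw, ?_⟩
    rw [hsin, zero_smul, add_zero, ← sub_eq_zero, ← norm_eq_zero, hperp, hsin]
  · refine ⟨(sin (angle u v))⁻¹ • (v - cos (angle u v) • u), ?_, ?_, ?_⟩
    · rw [norm_smul, hperp, norm_inv, Real.norm_of_nonneg (sin_angle_nonneg u v),
        inv_mul_cancel₀ hsin]
    · rw [real_inner_smul_right, inner_sub_right, real_inner_smul_right, hcos,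
        real_inner_self_eq_norm_sq, hu]
      ring
    · rw [smul_inv_smul₀ hsin]
      abel

noncomputable def planeMap (u w : E) : ℂ →L[ℝ] E :=
  Complex.reCLM.smulRight u + Complex.imCLM.smulRight w

@[simp]
theorem planeMap_apply (u w : E) (c : ℂ) : planeMap u w c = c.re • u + c.im • w := rfl

theorem norm_planeMap {u w : E} (hu : ‖u‖ = 1) (hw : ‖w‖ = 1) (huw : inner ℝ u w = 0) (c : ℂ) :
    ‖planeMap u w c‖ = ‖c‖ := by
  rw [← Real.sqrt_sq (norm_nonneg (planeMap u w c)), ← Real.sqrt_sq (norm_nonneg c),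
    Complex.sq_norm, Complex.normSq_apply, planeMap_apply, norm_add_sq_real, norm_smul, norm_smul,
    real_inner_smul_left, real_inner_smul_right, huw, hu, hw]
  simp only [Real.norm_eq_abs, mul_one, sq_abs, mul_zero, add_zero]
  ring_nf

noncomputable def logSpiral (z u w : E) (r : ℝ) (ζ : ℂ) (t : ℝ) : E :=
  z + planeMap u w (r * Complex.exp (t * ζ))

section logSpiral

variable (z u w : E) (r : ℝ) (ζ : ℂ)

theorem hasDerivAt_logSpiral (t : ℝ) :
    HasDerivAt (logSpiral z u w r ζ) (planeMap u w (r * (Complex.exp (t * ζ) * ζ))) t := by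
  have h : HasDerivAt (fun t : ℝ => (t : ℂ) * ζ) ζ t := by
    simpa using (hasDerivAt_id t).ofReal_comp.mul_const ζ
  exact ((planeMap u w).hasFDerivAt.comp_hasDerivAt t (h.cexp.const_mul (r : ℂ))).const_add z

theorem contDiff_logSpiral : ContDiff ℝ 1 (logSpiral z u w r ζ) :=
  contDiff_const.add ((planeMap u w).contDiff.comp
    (contDiff_const.mul ((Complex.ofRealCLM.contDiff.mul contDiff_const).cexp)))

variable {u w}

theorem norm_deriv_logSpiral (hu : ‖u‖ = 1) (hw : ‖w‖ = 1) (huw : inner ℝ u w = 0) (t : ℝ) :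
    ‖deriv (logSpiral z u w r ζ) t‖ = ‖ζ‖ * ‖logSpiral z u w r ζ t - z‖ := by
  rw [(hasDerivAt_logSpiral z u w r ζ t).deriv, logSpiral, add_sub_cancel_left,
    norm_planeMap hu hw huw, norm_planeMap hu hw huw, ← mul_assoc, norm_mul, mul_comm]

end logSpiral

theorem exists_curve_inv_norm_mul_norm_deriv_eq (hE : 2 ≤ Module.finrank ℝ E) {z x y : E}
    (hx : x ≠ z) (hy : y ≠ z) :
    ∃ γ : ℝ → E, ContDiff ℝ 1 γ ∧ γ 0 = x ∧ γ 1 = y ∧ ∀ t, γ t ≠ z ∧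
      ‖γ t - z‖⁻¹ * ‖deriv γ t‖ =
        √(angle (x - z) (y - z) ^ 2 + Real.log (‖x - z‖ / ‖y - z‖) ^ 2) := by
  have hr₀ : 0 < ‖x - z‖ := norm_pos_iff.2 (sub_ne_zero.2 hx)
  have hr₁ : 0 < ‖y - z‖ := norm_pos_iff.2 (sub_ne_zero.2 hy)
  set u := ‖x - z‖⁻¹ • (x - z)
  set v := ‖y - z‖⁻¹ • (y - z)
  have hθ : angle u v = angle (x - z) (y - z) := by
    rw [angle_smul_left_of_pos _ _ (inv_pos.2 hr₀), angle_smul_right_of_pos _ _ (inv_pos.2 hr₁)]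
  have hu : ‖u‖ = 1 := norm_smul_inv_norm (sub_ne_zero.2 hx)
  have hv₁ : ‖v‖ = 1 := norm_smul_inv_norm (sub_ne_zero.2 hy)
  obtain ⟨w, hw, huw, hv⟩ := exists_orthonormal_eq_cos_smul_add_sin_smul hE hu hv₁
  rw [hθ] at hv
  set ζ : ℂ := Real.log (‖y - z‖ / ‖x - z‖) + angle (x - z) (y - z) * Complex.I
  have hsub : ∀ t, ‖logSpiral z u w ‖x - z‖ ζ t - z‖ = ‖x - z‖ * Real.exp (t * ζ.re) := by
    intro t
    rw [logSpiral, add_sub_cancel_left, norm_planeMap hu hw huw, norm_mul, Complex.norm_exp]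
    simp
  refine ⟨logSpiral z u w ‖x - z‖ ζ, contDiff_logSpiral .., ?_, ?_, fun t => ⟨?_, ?_⟩⟩
  · simp [logSpiral, u, smul_inv_smul₀ hr₀.ne']
  · have hexp : Real.exp (Real.log (‖y - z‖ / ‖x - z‖)) = ‖y - z‖ / ‖x - z‖ :=
      Real.exp_log (div_pos hr₁ hr₀)
    have hre : ((‖x - z‖ : ℂ) * Complex.exp ((1 : ℝ) * ζ)).re =
        ‖y - z‖ * cos (angle (x - z) (y - z)) := by
      simp [ζ, Complex.exp_re, hexp]
      field_simp
    have him : ((‖x - z‖ : ℂ) * Complex.exp ((1 : ℝ) * ζ)).im =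
        ‖y - z‖ * sin (angle (x - z) (y - z)) := by
      simp [ζ, Complex.exp_im, hexp]
      field_simp
    rw [logSpiral, planeMap_apply, hre, him, mul_smul, mul_smul, ← smul_add, ← hv,
      smul_inv_smul₀ hr₁.ne', add_sub_cancel]
  · rw [← sub_ne_zero, ← norm_ne_zero_iff, hsub]
    positivity
  · have hne : ‖logSpiral z u w ‖x - z‖ ζ t - z‖ ≠ 0 := by rw [hsub]; positivity
    rw [norm_deriv_logSpiral z _ _ hu hw huw, mul_left_comm, inv_mul_cancel₀ hne, mul_one,
      Complex.norm_add_mul_I, add_comm, ← inv_div ‖x - z‖ ‖y - z‖, Real.log_inv, neg_sq]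

theorem frontier_compl_singleton [Nontrivial E] (z : E) : frontier ({z}ᶜ : Set E) = {z} := by
  rw [frontier_compl, frontier, closure_singleton, interior_singleton, sdiff_empty]

theorem qhDist_compl_singleton (hE : 2 ≤ Module.finrank ℝ E) {z x y : E} (hx : x ≠ z)
    (hy : y ≠ z) :
    qhDist ({z}ᶜ : Set E) x y =
      √(angle (x - z) (y - z) ^ 2 + Real.log (‖x - z‖ / ‖y - z‖) ^ 2) := by
  have : Nontrivial E := Module.nontrivial_of_finrank_pos (R := ℝ) (by omega)
  simp only [qhDist, confDist, frontier_compl_singleton, infDist_singleton, dist_eq_norm]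
  refine IsLeast.csInf_eq ⟨?_, ?_⟩
  · obtain ⟨γ, hγ, hγ0, hγ1, hγz⟩ := exists_curve_inv_norm_mul_norm_deriv_eq hE hx hy
    refine ⟨γ, hγ.contDiffOn, hγ0, hγ1, fun t _ => (hγz t).1, ?_⟩
    have hconst : ∀ t ∈ uIcc (0 : ℝ) 1, ‖γ t - z‖⁻¹ * ‖derivWithin γ (Icc 0 1) t‖ =
        √(angle (x - z) (y - z) ^ 2 + Real.log (‖x - z‖ / ‖y - z‖) ^ 2) := fun t ht => by
      rw [uIcc_of_le zero_le_one] at ht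
      rw [(hγ.differentiable one_ne_zero t).derivWithin (uniqueDiffOn_Icc zero_lt_one t ht),
        (hγz t).2]
    simp [intervalIntegral.integral_congr hconst]
  · rintro L ⟨γ, hγ, rfl, rfl, hγz, rfl⟩
    exact sqrt_angle_sq_add_log_sq_le_integral (v := fun t => γ t - z) zero_le_one
      (fun t ht => sub_ne_zero.2 (hγz t ht))
      (fun t ht => ((hγ.differentiableOn one_ne_zero t ht).hasDerivWithinAt).sub_const z)
      (hγ.continuousOn_derivWithin (uniqueDiffOn_Icc zero_lt_one) le_rfl)

end

/-- Martin–Osgood formula for the quasihyperbolic metric of the punctured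
space: `k_{ℝⁿ∖{z}}(x,y) = √(θ² + log²(|x-z|/|y-z|))` with `θ = ∠(x,z,y)`. -/
theorem qhDist_punctured_formula {n : ℕ} (hn : 2 ≤ n)
    (z x y : EuclideanSpace ℝ (Fin n)) (hx : x ≠ z) (hy : y ≠ z) :
    qhDist ({z}ᶜ : Set (EuclideanSpace ℝ (Fin n))) x y =
      Real.sqrt ((EuclideanGeometry.angle x z y) ^ 2 +
        (Real.log (‖x - z‖ / ‖y - z‖)) ^ 2) :=
  qhDist_compl_singleton (by rwa [finrank_euclideanSpace_fin]) hx hy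
end
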